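/- arXiv:1903.09428 — 7 statements merged into one kernel-verified Lean document; each statement's English description precedes it below -/
import Mathlib

section
/- Let b ∈ (0,1) and γ ∈ (0,1]. Then the quantity D := b·(log b)·√γ·J_1(√γ b) + J_0(√γ b) is strictly positive, and if A_0, C_0 ∈ ℝ satisfy the matching system A_0·J_0(√γ b) = 1 + C_0·log b and A_0·√γ·J_0'(√γ b) = C_0/b (where J_0' denotes the derivative of J_0), then C_0 = − b√γ·J_1(√γ b) / D. In particular the zeroth eigenvalue of the Dirichlet-to-Neumann map for the one-step radial potential q = γχ_{(0,b)}(|x|) on the unit disk equals c_0 = − b√γ J_1(√γ b) / ( b (log b) √γ J_1(√γ b) + J_0(√γ b) ). -/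
/-!
The substitution `t = sin θ` turns the Poisson integral into `J₀(x) = π⁻¹ ∫ cos (x sin θ)` and
`x J₁(x) = π⁻¹ x² ∫ cos (x sin θ) cos² θ` over `[-π/2, π/2]`; differentiating under the integral
sign and integrating by parts gives `J₀' = -J₁`. With `x = √γ b` the denominator is
`D = J₀(x) + (log b) x J₁(x) = π⁻¹ ∫ cos (x sin θ) (1 + x² log b cos² θ)`, whose integrand is
positive because `|x| < 1 < π/2` and `x² log b ≥ b² log b ≥ b² - b > -1`.
The matching system is then a nonsingular linear system for `A₀, C₀` with determinant `D`.
-/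

open Real Set

/-- Bessel function of the first kind of integer order, via the Poisson integral
representation. -/
noncomputable def besselJ (n : ℕ) (r : ℝ) : ℝ :=
  r ^ n / (2 ^ n * Real.Gamma ((n : ℝ) + 1 / 2) * Real.sqrt Real.pi) *
    ∫ t in (-1 : ℝ)..1, Real.cos (r * t) * (1 - t ^ 2) ^ ((n : ℝ) - 1 / 2)

/-- The zeroth eigenvalue of the Dirichlet-to-Neumann map for the one-step radial
potential `q = γ χ_{(0,b)}(|x|)` on the unit disk. -/
noncomputable def c₀ (b γ : ℝ) : ℝ :=
  -(b * Real.sqrt γ * besselJ 1 (Real.sqrt γ * b)) /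
    (b * Real.log b * Real.sqrt γ * besselJ 1 (Real.sqrt γ * b) + besselJ 0 (Real.sqrt γ * b))

open intervalIntegral

lemma mul_sq_rpow_natCast_sub_half {x : ℝ} (hx : 0 < x) (n : ℕ) :
    x * (x ^ 2) ^ ((n : ℝ) - 1 / 2) = x ^ (2 * n) := by
  rw [← rpow_natCast x 2, ← rpow_mul hx.le, mul_comm x, ← rpow_add_one hx.ne',
    ← rpow_natCast]
  push_cast
  ring_nf

theorem integral_poisson_eq_integral_sin (n : ℕ) (r : ℝ) :
    ∫ t in (-1 : ℝ)..1, cos (r * t) * (1 - t ^ 2) ^ ((n : ℝ) - 1 / 2) =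
      ∫ θ in -(π / 2)..π / 2, cos (r * sin θ) * cos θ ^ (2 * n) := by
  have hsubst := integral_comp_mul_deriv_of_deriv_nonneg (a := -(π / 2)) (b := π / 2)
    (g := fun t => cos (r * t) * (1 - t ^ 2) ^ ((n : ℝ) - 1 / 2))
    continuousOn_sin (fun θ _ => hasDerivAt_sin θ) fun θ hθ => cos_nonneg_of_mem_Icc <| by
      rw [min_eq_left (by linarith [pi_pos]), max_eq_right (by linarith [pi_pos])] at hθ
      exact Ioo_subset_Icc_self hθ
  rw [sin_neg, sin_pi_div_two] at hsubst
  rw [← hsubst, integral_of_le (by linarith [pi_pos]), integral_of_le (by linarith [pi_pos]),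
    MeasureTheory.integral_Ioc_eq_integral_Ioo, MeasureTheory.integral_Ioc_eq_integral_Ioo]
  refine MeasureTheory.setIntegral_congr_fun measurableSet_Ioo fun θ hθ => ?_
  rw [Function.comp_apply, ← cos_sq', mul_assoc, mul_comm _ (cos θ),
    mul_sq_rpow_natCast_sub_half (cos_pos_of_mem_Ioo hθ)]

theorem besselJ_eq_integral_sin (n : ℕ) (r : ℝ) :
    besselJ n r = r ^ n / (2 ^ n * Gamma ((n : ℝ) + 1 / 2) * √π) *
      ∫ θ in -(π / 2)..π / 2, cos (r * sin θ) * cos θ ^ (2 * n) := by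
  rw [besselJ, integral_poisson_eq_integral_sin]

theorem besselJ_zero_eq (r : ℝ) :
    besselJ 0 r = π⁻¹ * ∫ θ in -(π / 2)..π / 2, cos (r * sin θ) := by
  rw [besselJ_eq_integral_sin, Nat.cast_zero, zero_add, Gamma_one_half_eq, mul_assoc,
    mul_self_sqrt pi_pos.le]
  simp

theorem besselJ_one_eq (r : ℝ) :
    besselJ 1 r = r * π⁻¹ * ∫ θ in -(π / 2)..π / 2, cos (r * sin θ) * cos θ ^ 2 := by
  have hΓ : Gamma (1 + 1 / 2) = √π / 2 := by
    rw [add_comm, Gamma_add_one (by norm_num), Gamma_one_half_eq]; ring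
  rw [besselJ_eq_integral_sin, Nat.cast_one, hΓ]
  field_simp
  rw [sq_sqrt pi_pos.le]

theorem hasDerivAt_integral_cos_mul_sin (a b r : ℝ) :
    HasDerivAt (fun x => ∫ θ in a..b, cos (x * sin θ))
      (∫ θ in a..b, sin (r * sin θ) * -sin θ) r := by
  refine (hasDerivAt_integral_of_dominated_loc_of_deriv_le (bound := fun _ => 1)
    (F' := fun x θ => sin (x * sin θ) * -sin θ) (s := univ) Filter.univ_mem
    (.of_forall fun x => by fun_prop) (Continuous.intervalIntegrable (by fun_prop) _ _)
    (by fun_prop) ?_ intervalIntegrable_const (.of_forall fun θ _ x _ => ?_)).2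
  · refine .of_forall fun θ _ x _ => ?_
    rw [norm_mul, norm_neg]
    exact mul_le_one₀ (abs_sin_le_one _) (norm_nonneg _) (abs_sin_le_one _)
  · simpa using
      ((hasDerivAt_mul_const (sin θ)).cos : HasDerivAt (fun x => cos (x * sin θ)) _ x)

theorem hasDerivAt_besselJ_zero (r : ℝ) : HasDerivAt (besselJ 0) (-besselJ 1 r) r := by
  have hparts : ∫ θ in -(π / 2)..π / 2, sin (r * sin θ) * -sin θ =
      -(r * ∫ θ in -(π / 2)..π / 2, cos (r * sin θ) * cos θ ^ 2) := by
    rw [intervalIntegral.integral_mul_deriv_eq_deriv_mul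
      (u' := fun θ => cos (r * sin θ) * (r * cos θ))
      (fun θ _ => ((hasDerivAt_sin θ).const_mul r).sin) (fun θ _ => hasDerivAt_cos θ)
      (Continuous.intervalIntegrable (by fun_prop) _ _)
      (Continuous.intervalIntegrable (by fun_prop) _ _), ← integral_const_mul]
    simp only [cos_neg, cos_pi_div_two, mul_zero, sub_zero, zero_sub, ← integral_neg]
    congr 1
    ext θ
    ring
  have hfun : besselJ 0 = fun x => π⁻¹ * ∫ θ in -(π / 2)..π / 2, cos (x * sin θ) :=
    funext besselJ_zero_eq
  rw [hfun, besselJ_one_eq]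
  exact ((hasDerivAt_integral_cos_mul_sin _ _ r).const_mul π⁻¹).congr_deriv
    (by rw [hparts]; ring)

theorem deriv_besselJ_zero (r : ℝ) : deriv (besselJ 0) r = -besselJ 1 r :=
  (hasDerivAt_besselJ_zero r).deriv

lemma neg_one_lt_sq_mul_log {b : ℝ} (hb : 0 ≤ b) : -1 < b ^ 2 * log b := by
  nlinarith [mul_le_mul_of_nonneg_left (self_sub_one_le_mul_log hb) hb]

theorem besselJ_zero_add_mul_besselJ_one_pos {x a : ℝ} (hx : |x| < π / 2)
    (ha : -1 < a * x ^ 2) : 0 < besselJ 0 x + a * x * besselJ 1 x := by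
  have hint : ∀ f : ℝ → ℝ, Continuous f →
      IntervalIntegrable f MeasureTheory.volume (-(π / 2)) (π / 2) :=
    fun f hf => hf.intervalIntegrable _ _
  have hcomb : besselJ 0 x + a * x * besselJ 1 x = π⁻¹ *
      ∫ θ in -(π / 2)..π / 2, cos (x * sin θ) * (1 + a * x ^ 2 * cos θ ^ 2) := by
    have hsplit : (fun θ => cos (x * sin θ) * (1 + a * x ^ 2 * cos θ ^ 2)) =
        fun θ => cos (x * sin θ) + a * x ^ 2 * (cos (x * sin θ) * cos θ ^ 2) := by
      ext θ; ring
    rw [hsplit, integral_add (hint _ (by fun_prop)) (hint _ (by fun_prop)), integral_const_mul,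
      besselJ_zero_eq, besselJ_one_eq]
    ring
  have hpt : ∀ θ, 0 < cos (x * sin θ) * (1 + a * x ^ 2 * cos θ ^ 2) := by
    intro θ
    have hcos : 0 < cos (x * sin θ) := by
      have hsmall : |x * sin θ| < π / 2 := by
        rw [abs_mul]
        exact (mul_le_of_le_one_right (abs_nonneg x) (abs_sin_le_one θ)).trans_lt hx
      exact cos_pos_of_mem_Ioo (abs_lt.mp hsmall)
    have hfac : 0 < 1 + a * x ^ 2 * cos θ ^ 2 := by
      rcases le_total 0 (a * x ^ 2) with h | h
      · positivity
      · nlinarith [cos_sq_le_one θ, sq_nonneg (cos θ)]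
    positivity
  rw [hcomb]
  exact mul_pos (inv_pos.mpr pi_pos)
    (intervalIntegral_pos_of_pos (hint _ (by fun_prop)) hpt (by linarith [pi_pos]))

theorem dtn_zeroth_eigenvalue (b γ : ℝ) (hb : b ∈ Set.Ioo (0 : ℝ) 1)
    (hγ : γ ∈ Set.Ioc (0 : ℝ) 1) :
    0 < b * Real.log b * Real.sqrt γ * besselJ 1 (Real.sqrt γ * b) +
        besselJ 0 (Real.sqrt γ * b) ∧
      ∀ A₀ C₀ : ℝ,
        A₀ * besselJ 0 (Real.sqrt γ * b) = 1 + C₀ * Real.log b →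
        A₀ * Real.sqrt γ * deriv (besselJ 0) (Real.sqrt γ * b) = C₀ / b →
        C₀ = -(b * Real.sqrt γ * besselJ 1 (Real.sqrt γ * b)) /
          (b * Real.log b * Real.sqrt γ * besselJ 1 (Real.sqrt γ * b) +
            besselJ 0 (Real.sqrt γ * b)) ∧
        c₀ b γ = -(b * Real.sqrt γ * besselJ 1 (Real.sqrt γ * b)) /
          (b * Real.log b * Real.sqrt γ * besselJ 1 (Real.sqrt γ * b) +
            besselJ 0 (Real.sqrt γ * b)) := by
  obtain ⟨hb₀, hb₁⟩ := hb
  obtain ⟨hγ₀, hγ₁⟩ := hγ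
  have hsqrt : √γ ≤ 1 := sqrt_le_one.mpr hγ₁
  have hx : |√γ * b| < π / 2 := by
    rw [abs_of_nonneg (by positivity)]
    nlinarith [pi_gt_three, sqrt_nonneg γ]
  have hlog : -1 < log b * (√γ * b) ^ 2 := by
    rw [mul_pow, sq_sqrt hγ₀.le]
    nlinarith [neg_one_lt_sq_mul_log hb₀.le, log_neg hb₀ hb₁, sq_nonneg b]
  have hD : 0 < b * log b * √γ * besselJ 1 (√γ * b) + besselJ 0 (√γ * b) := by
    convert besselJ_zero_add_mul_besselJ_one_pos hx hlog using 1
    ring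
  refine ⟨hD, fun A₀ C₀ h₀ h₁ => ⟨?_, rfl⟩⟩
  rw [deriv_besselJ_zero, eq_div_iff hb₀.ne'] at h₁
  rw [eq_div_iff hD.ne']
  linear_combination (-(b * log b * √γ * besselJ 1 (√γ * b) + besselJ 0 (√γ * b))) * h₁ -
    (b * √γ * besselJ 1 (√γ * b)) * (h₀ - log b * h₁)
end

section
/- Let b ∈ (0,1), γ ∈ (0,1] and n ≥ 1 an integer. Then the quantity D_n := J_{n−1}(√γ b) + b^{2n} J_{n+1}(√γ b) is strictly positive, and if A_n, C_n ∈ ℝ satisfy the matching system A_n·J_n(√γ b) = C_n·(b^n − b^{−n}) + b^n and A_n·√γ·J_n'(√γ b) = n·C_n·(b^{n−1} + b^{−n−1}) + n·b^{n−1} (where J_n' denotes the derivative of J_n), then 2nC_n + n = n·( J_{n−1}(√γ b) − b^{2n} J_{n+1}(√γ b) ) / D_n. In particular the n-th eigenvalue of the Dirichlet-to-Neumann map for the one-step radial potential q = γχ_{(0,b)}(|x|) on the unit disk equals c_n = n ( J_{n−1}(√γ b) − b^{2n} J_{n+1}(√γ b) ) / ( J_{n−1}(√γ b) + b^{2n}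 J_{n+1}(√γ b) ). -/
open Real Set

/-- The `n`-th eigenvalue (for `n ≥ 1`) of the Dirichlet-to-Neumann map for the one-step
radial potential `q = γ χ_{(0,b)}(|x|)` on the unit disk. -/
noncomputable def cEig (n : ℕ) (b γ : ℝ) : ℝ :=
  n * (besselJ (n - 1) (Real.sqrt γ * b) - b ^ (2 * n) * besselJ (n + 1) (Real.sqrt γ * b)) /
    (besselJ (n - 1) (Real.sqrt γ * b) + b ^ (2 * n) * besselJ (n + 1) (Real.sqrt γ * b))

/-! In the Poisson representation
`J_n(r) = r^n / (2^n Γ(n + 1/2) √π) · ∫₋₁¹ cos(rt) (1 - t²)^(n - 1/2) dt`,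
integration by parts against the weights `(1 - t²)^(ν + 1)`, `ν > -1`, which vanish at `±1`,
gives both `J_n' = (n / r) J_n - J_{n+1}` and `J_{n-1} + J_{n+1} = (2n / r) J_n`.
For `0 < r < π / 2` the integrand is positive, so every `J_n(r)` is positive and so is `D_n`.
Given these two identities, eliminating `A_n` from the matching system is linear algebra and
yields `C_n (J_{n-1} + b^{2n} J_{n+1}) = -b^{2n} J_{n+1}`. -/

open MeasureTheory intervalIntegral

theorem intervalIntegrable_one_sub_sq_rpow {ν : ℝ} (hν : -1 < ν) :
    IntervalIntegrable (fun t : ℝ => (1 - t ^ 2) ^ ν) volume (-1) 1 := by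
  -- `(1 - t²)^ν = (t + 1)^ν (1 - t)^ν`, and on each half of `[-1, 1]` only one factor is singular
  have hneg : IntervalIntegrable (fun t : ℝ => (t + 1) ^ ν * (1 - t) ^ ν) volume (-1) 0 := by
    refine IntervalIntegrable.mul_continuousOn (by
      simpa using (intervalIntegrable_rpow' (a := 0) (b := 1) hν).comp_add_right 1) ?_
    refine (continuousOn_const.sub continuousOn_id).rpow_const fun t ht => Or.inl ?_
    rw [uIcc_of_le (by norm_num)] at ht
    exact (show (0 : ℝ) < 1 - t by linarith [ht.2]).ne'
  have hpos : IntervalIntegrable (fun t : ℝ => (1 - t) ^ ν * (t + 1) ^ ν) volume 0 1 := by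
    refine IntervalIntegrable.mul_continuousOn (by
      simpa using ((intervalIntegrable_rpow' (a := 0) (b := 1) hν).comp_sub_left 1).symm) ?_
    refine (continuousOn_id.add continuousOn_const).rpow_const fun t ht => Or.inl ?_
    rw [uIcc_of_le (by norm_num)] at ht
    exact (show (0 : ℝ) < t + 1 by linarith [ht.1]).ne'
  refine (hneg.trans (hpos.congr fun t _ => mul_comm _ _)).congr fun t ht => ?_
  rw [uIoc_of_le (by norm_num)] at ht
  rw [← mul_rpow (by linarith [ht.1]) (by linarith [ht.2])]
  ring_nf

theorem intervalIntegrable_mul_one_sub_sq_rpow {f : ℝ → ℝ} {ν : ℝ} (hν : -1 < ν)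
    (hf : Continuous f) : IntervalIntegrable (fun t => f t * (1 - t ^ 2) ^ ν) volume (-1) 1 :=
  (intervalIntegrable_one_sub_sq_rpow hν).continuousOn_mul hf.continuousOn

theorem hasDerivAt_one_sub_sq_rpow {t : ℝ} (ht : t ∈ Ioo (-1 : ℝ) 1) (p : ℝ) :
    HasDerivAt (fun t : ℝ => (1 - t ^ 2) ^ p) (-(2 * t) * p * (1 - t ^ 2) ^ (p - 1)) t := by
  have hbase : (1 : ℝ) - t ^ 2 ≠ 0 := by nlinarith [ht.1, ht.2]
  simpa using ((hasDerivAt_pow 2 t).const_sub 1).rpow_const (p := p) (Or.inl hbase)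

theorem integral_deriv_mul_one_sub_sq_rpow {f f' : ℝ → ℝ} {ν : ℝ} (hν : -1 < ν)
    (hf : ∀ t, HasDerivAt f (f' t) t) (hf' : Continuous f') :
    ∫ t in (-1 : ℝ)..1, f' t * (1 - t ^ 2) ^ (ν + 1) =
      (2 * ν + 2) * ∫ t in (-1 : ℝ)..1, t * f t * (1 - t ^ 2) ^ ν := by
  have hfc : Continuous f := continuous_iff_continuousAt.2 fun t => (hf t).continuousAt
  have hw : Continuous fun t : ℝ => (1 - t ^ 2) ^ (ν + 1) := by
    fun_prop (disch := linarith)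
  have hint₁ : IntervalIntegrable (fun t => f' t * (1 - t ^ 2) ^ (ν + 1)) volume (-1) 1 :=
    (hf'.mul hw).intervalIntegrable _ _
  have hint₂ : IntervalIntegrable (fun t => t * f t * (1 - t ^ 2) ^ ν) volume (-1) 1 :=
    intervalIntegrable_mul_one_sub_sq_rpow hν (by fun_prop)
  have hderiv : ∀ t ∈ Ioo (-1 : ℝ) 1, HasDerivAt (fun t => f t * (1 - t ^ 2) ^ (ν + 1))
      (f' t * (1 - t ^ 2) ^ (ν + 1) - (2 * ν + 2) * (t * f t * (1 - t ^ 2) ^ ν)) t := by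
    intro t ht
    refine ((hf t).mul (hasDerivAt_one_sub_sq_rpow ht (ν + 1))).congr_deriv ?_
    rw [add_sub_cancel_right]
    ring
  have hftc := integral_eq_sub_of_hasDeriv_right_of_le (by norm_num) (hfc.fun_mul hw).continuousOn
    (fun t ht => (hderiv t ht).hasDerivWithinAt) (hint₁.sub (hint₂.const_mul _))
  have hν1 : ν + 1 ≠ 0 := by linarith
  rw [integral_sub hint₁ (hint₂.const_mul _), intervalIntegral.integral_const_mul] at hftc
  simpa [zero_rpow hν1, sub_eq_zero] using hftc

noncomputable def besselPoissonIntegral (ν r : ℝ) : ℝ :=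
  ∫ t in (-1 : ℝ)..1, cos (r * t) * (1 - t ^ 2) ^ ν

theorem besselPoissonIntegral_pos {ν r : ℝ} (hν : -1 < ν) (hr : |r| < π / 2) :
    0 < besselPoissonIntegral ν r := by
  refine intervalIntegral_pos_of_pos_on
    (intervalIntegrable_mul_one_sub_sq_rpow hν (by fun_prop)) (fun t ht => ?_) (by norm_num)
  have hrt : |r * t| < π / 2 := by
    rw [abs_mul]
    calc |r| * |t| ≤ |r| := mul_le_of_le_one_right (abs_nonneg r) (abs_le.2 ⟨ht.1.le, ht.2.le⟩)
      _ < π / 2 := hr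
  exact mul_pos (cos_pos_of_mem_Ioo (abs_lt.1 hrt)) (rpow_pos_of_pos (by nlinarith [ht.1, ht.2]) ν)

theorem integral_mul_sin_mul_one_sub_sq_rpow {ν : ℝ} (hν : -1 < ν) (r : ℝ) :
    (2 * ν + 2) * ∫ t in (-1 : ℝ)..1, t * sin (r * t) * (1 - t ^ 2) ^ ν =
      r * besselPoissonIntegral (ν + 1) r := by
  have hsin (t : ℝ) : HasDerivAt (fun t => sin (r * t)) (r * cos (r * t)) t := by
    simpa [mul_comm] using ((hasDerivAt_id t).const_mul r).sin
  rw [← integral_deriv_mul_one_sub_sq_rpow hν hsin (by fun_prop), besselPoissonIntegral,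
    ← intervalIntegral.integral_const_mul]
  simp only [mul_assoc]

theorem hasDerivAt_besselPoissonIntegral {ν : ℝ} (hν : -1 < ν) (r : ℝ) :
    HasDerivAt (besselPoissonIntegral ν) (-(r / (2 * ν + 2)) * besselPoissonIntegral (ν + 1) r)
      r := by
  have hweight : ∀ t ∈ uIoc (-1 : ℝ) 1, 0 ≤ 1 - t ^ 2 := fun t ht => by
    rw [uIoc_of_le (by norm_num)] at ht
    nlinarith [ht.1, ht.2]
  have hdiff := hasDerivAt_integral_of_dominated_loc_of_deriv_le (μ := volume) (a := -1) (b := 1)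
    (F := fun x t => cos (x * t) * (1 - t ^ 2) ^ ν)
    (F' := fun x t => -(t * sin (x * t)) * (1 - t ^ 2) ^ ν) (x₀ := r)
    (bound := fun t => (1 - t ^ 2) ^ ν) (s := univ) Filter.univ_mem
    (Filter.Eventually.of_forall fun x => (intervalIntegrable_mul_one_sub_sq_rpow hν
      (by fun_prop)).def'.aestronglyMeasurable)
    (intervalIntegrable_mul_one_sub_sq_rpow hν (by fun_prop))
    (intervalIntegrable_mul_one_sub_sq_rpow hν (by fun_prop)).def'.aestronglyMeasurable
    (ae_of_all _ fun t ht x _ => ?_) (intervalIntegrable_one_sub_sq_rpow hν)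
    (ae_of_all _ fun t _ x _ => ?_)
  · have hmom := integral_mul_sin_mul_one_sub_sq_rpow hν r
    have h2ν : 2 * ν + 2 ≠ 0 := by linarith
    refine hdiff.2.congr_deriv ?_
    simp only [neg_mul, intervalIntegral.integral_neg, neg_inj]
    rw [div_mul_eq_mul_div, ← hmom, mul_div_cancel_left₀ _ h2ν]
  · have ht1 : |t| ≤ 1 := by
      rw [uIoc_of_le (by norm_num)] at ht
      exact abs_le.2 ⟨ht.1.le, ht.2⟩
    rw [norm_mul, norm_neg, norm_mul, Real.norm_of_nonneg (rpow_nonneg (hweight t ht) ν)]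
    exact mul_le_of_le_one_left (rpow_nonneg (hweight t ht) ν)
      (mul_le_one₀ ht1 (norm_nonneg _) (abs_sin_le_one _))
  · simpa [mul_comm] using (((hasDerivAt_id x).mul_const t).cos).mul_const ((1 - t ^ 2) ^ ν)

theorem besselPoissonIntegral_recurrence {ν : ℝ} (hν : -1 < ν) (r : ℝ) :
    (2 * ν + 2) * besselPoissonIntegral ν r =
      (2 * ν + 3) * besselPoissonIntegral (ν + 1) r -
        r ^ 2 / (2 * ν + 4) * besselPoissonIntegral (ν + 2) r := by
  have hν1 : -1 < ν + 1 := by linarith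
  have hf (t : ℝ) :
      HasDerivAt (fun t => t * cos (r * t)) (cos (r * t) - r * (t * sin (r * t))) t := by
    refine ((hasDerivAt_id t).mul ((hasDerivAt_id t).const_mul r).cos).congr_deriv ?_
    simp only [id, mul_one]
    ring
  have hibp := integral_deriv_mul_one_sub_sq_rpow hν hf (by fun_prop)
  have hlhs : ∫ t in (-1 : ℝ)..1, (cos (r * t) - r * (t * sin (r * t))) * (1 - t ^ 2) ^ (ν + 1) =
      besselPoissonIntegral (ν + 1) r -
        r * ∫ t in (-1 : ℝ)..1, t * sin (r * t) * (1 - t ^ 2) ^ (ν + 1) := by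
    rw [besselPoissonIntegral, ← intervalIntegral.integral_const_mul,
      ← intervalIntegral.integral_sub (intervalIntegrable_mul_one_sub_sq_rpow hν1 (by fun_prop))
        ((intervalIntegrable_mul_one_sub_sq_rpow hν1 (by fun_prop)).const_mul r)]
    congr 1
    ext t
    ring
  -- `t² (1 - t²)^ν = (1 - t²)^ν - (1 - t²)^(ν + 1)` on `[-1, 1]`
  have hrhs : ∫ t in (-1 : ℝ)..1, t * (t * cos (r * t)) * (1 - t ^ 2) ^ ν =
      besselPoissonIntegral ν r - besselPoissonIntegral (ν + 1) r := by
    rw [besselPoissonIntegral, besselPoissonIntegral,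
      ← intervalIntegral.integral_sub (intervalIntegrable_mul_one_sub_sq_rpow hν (by fun_prop))
        (intervalIntegrable_mul_one_sub_sq_rpow hν1 (by fun_prop))]
    refine intervalIntegral.integral_congr fun t ht => ?_
    rw [uIcc_of_le (by norm_num)] at ht
    have hw : 0 ≤ 1 - t ^ 2 := by nlinarith [ht.1, ht.2]
    rw [rpow_add' hw (by linarith), rpow_one]
    ring
  have hmom := integral_mul_sin_mul_one_sub_sq_rpow hν1 r
  rw [show ν + 1 + 1 = ν + 2 by ring] at hmom
  rw [hlhs, hrhs] at hibp
  have h2ν : 2 * ν + 4 ≠ 0 := by linarith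
  field_simp
  linear_combination (-(2 * ν + 4)) * hibp - r * hmom

noncomputable def besselConst (n : ℕ) : ℝ :=
  2 ^ n * Gamma ((n : ℝ) + 1 / 2) * √π

theorem besselConst_pos (n : ℕ) : 0 < besselConst n := by
  unfold besselConst
  have := Gamma_pos_of_pos (by positivity : (0 : ℝ) < n + 1 / 2)
  positivity

theorem besselConst_succ (n : ℕ) : besselConst (n + 1) = (2 * n + 1) * besselConst n := by
  rw [besselConst, besselConst, Nat.cast_succ, add_right_comm, Gamma_add_one (by positivity),
    pow_succ]
  ring

theorem besselJ_eq (n : ℕ) (r : ℝ) :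
    besselJ n r = r ^ n / besselConst n * besselPoissonIntegral (n - 1 / 2) r :=
  rfl

theorem besselJ_succ_eq (n : ℕ) (r : ℝ) :
    besselJ (n + 1) r =
      r ^ (n + 1) / ((2 * n + 1) * besselConst n) * besselPoissonIntegral (n - 1 / 2 + 1) r := by
  rw [besselJ_eq, besselConst_succ, Nat.cast_succ, sub_add_eq_add_sub]

theorem besselJ_pos (n : ℕ) {r : ℝ} (hr₀ : 0 < r) (hr : r < π / 2) : 0 < besselJ n r := by
  have hI := besselPoissonIntegral_pos (ν := n - 1 / 2) (by linarith [n.cast_nonneg (α := ℝ)])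
    (abs_lt.2 ⟨by linarith [pi_pos], hr⟩)
  rw [besselJ_eq]
  have := besselConst_pos n
  positivity

theorem hasDerivAt_besselJ (n : ℕ) {r : ℝ} (hr : r ≠ 0) :
    HasDerivAt (besselJ n) (n / r * besselJ n r - besselJ (n + 1) r) r := by
  have hν : -1 < (n : ℝ) - 1 / 2 := by linarith [n.cast_nonneg (α := ℝ)]
  have hK := (besselConst_pos n).ne'
  have hpow : (n : ℝ) * r ^ (n - 1) = n / r * r ^ n := by
    rcases n with _ | n
    · simp
    · field_simp
      simp [pow_succ]
  rw [funext (besselJ_eq n)]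
  dsimp only
  refine (((hasDerivAt_pow n r).div_const _).mul
    (hasDerivAt_besselPoissonIntegral hν r)).congr_deriv ?_
  rw [besselJ_succ_eq, hpow, show 2 * ((n : ℝ) - 1 / 2) + 2 = 2 * n + 1 by ring]
  generalize besselPoissonIntegral (n - 1 / 2) r = I₀
  generalize besselPoissonIntegral (n - 1 / 2 + 1) r = I₁
  field_simp
  ring

theorem besselJ_add_besselJ_add_two (m : ℕ) (r : ℝ) :
    r * (besselJ m r + besselJ (m + 2) r) = 2 * (m + 1) * besselJ (m + 1) r := by
  have hν : -1 < (m : ℝ) - 1 / 2 := by linarith [m.cast_nonneg (α := ℝ)]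
  have hrec := besselPoissonIntegral_recurrence hν r
  rw [show 2 * ((m : ℝ) - 1 / 2) + 2 = 2 * m + 1 by ring,
    show 2 * ((m : ℝ) - 1 / 2) + 3 = 2 * m + 2 by ring,
    show 2 * ((m : ℝ) - 1 / 2) + 4 = 2 * m + 3 by ring] at hrec
  rw [besselJ_eq, besselJ_succ_eq, besselJ_succ_eq, besselConst_succ,
    show ((m + 1 : ℕ) : ℝ) - 1 / 2 + 1 = m - 1 / 2 + 2 by push_cast; ring]
  generalize besselPoissonIntegral (m - 1 / 2) r = I₀ at hrec ⊢
  generalize besselPoissonIntegral (m - 1 / 2 + 1) r = I₁ at hrec ⊢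
  generalize besselPoissonIntegral (m - 1 / 2 + 2) r = I₂ at hrec ⊢
  have hK := (besselConst_pos m).ne'
  have h2m : (2 * m + 3 : ℝ) ≠ 0 := by positivity
  push_cast
  field_simp at hrec ⊢
  linear_combination (r * r ^ m) * hrec

theorem two_mul_coeff_add_eq_of_matching {n : ℕ} {b s A C P J Q J' : ℝ} (hn : n ≠ 0)
    (hb : b ≠ 0) (hs : s ≠ 0) (hD : P + b ^ (2 * n) * Q ≠ 0)
    (hrec : s * b * (P + Q) = 2 * n * J) (hJ' : J' = n / (s * b) * J - Q)
    (h₁ : A * J = C * (b ^ (n : ℤ) - b ^ (-(n : ℤ))) + b ^ (n : ℤ))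
    (h₂ : A * s * J' = n * C * (b ^ ((n : ℤ) - 1) + b ^ (-(n : ℤ) - 1)) + n * b ^ ((n : ℤ) - 1)) :
    2 * n * C + n = n * (P - b ^ (2 * n) * Q) / (P + b ^ (2 * n) * Q) := by
  simp only [zpow_neg, zpow_sub₀ hb, zpow_natCast, zpow_one] at h₁ h₂
  rw [pow_mul'] at hD ⊢
  set B := b ^ n
  have hB : B ≠ 0 := pow_ne_zero n hb
  have hn' : (n : ℝ) ≠ 0 := Nat.cast_ne_zero.2 hn
  have h₁' : A * J * B = C * (B ^ 2 - 1) + B ^ 2 := by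
    field_simp at h₁
    linear_combination h₁
  -- the `n / (s b)` part of `J'` cancels against `h₁`, leaving only the `Q` part
  have hAQ : A * s * Q * (b * B) = -(2 * n * C) := by
    have e : A * s * J' = n / b * (A * J) - A * s * Q := by
      rw [hJ']
      field_simp
    rw [e, h₁] at h₂
    field_simp at h₂
    linear_combination -h₂
  have hC : C * (P + B ^ 2 * Q) = -(B ^ 2 * Q) := by
    refine mul_left_cancel₀ (mul_ne_zero two_ne_zero hn') ?_
    linear_combination (-2 * n * Q) * h₁' - A * B * Q * hrec + (P + Q) * hAQ
  rw [eq_div_iff hD]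
  linear_combination 2 * n * hC

theorem dtn_nth_eigenvalue (n : ℕ) (hn : 1 ≤ n) (b γ : ℝ) (hb : b ∈ Set.Ioo (0 : ℝ) 1)
    (hγ : γ ∈ Set.Ioc (0 : ℝ) 1) :
    0 < besselJ (n - 1) (Real.sqrt γ * b) +
        b ^ (2 * n) * besselJ (n + 1) (Real.sqrt γ * b) ∧
      ∀ Aₙ Cₙ : ℝ,
        Aₙ * besselJ n (Real.sqrt γ * b) = Cₙ * (b ^ (n : ℤ) - b ^ (-(n : ℤ))) + b ^ (n : ℤ) →
        Aₙ * Real.sqrt γ * deriv (besselJ n) (Real.sqrt γ * b) =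
          n * Cₙ * (b ^ ((n : ℤ) - 1) + b ^ (-(n : ℤ) - 1)) + n * b ^ ((n : ℤ) - 1) →
        2 * n * Cₙ + n =
          n * (besselJ (n - 1) (Real.sqrt γ * b) -
              b ^ (2 * n) * besselJ (n + 1) (Real.sqrt γ * b)) /
            (besselJ (n - 1) (Real.sqrt γ * b) +
              b ^ (2 * n) * besselJ (n + 1) (Real.sqrt γ * b)) ∧
        cEig n b γ =
          n * (besselJ (n - 1) (Real.sqrt γ * b) -
              b ^ (2 * n) * besselJ (n + 1) (Real.sqrt γ * b)) /
            (besselJ (n - 1) (Real.sqrt γ * b) +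
              b ^ (2 * n) * besselJ (n + 1) (Real.sqrt γ * b)) := by
  obtain ⟨hb₀, hb₁⟩ := hb
  have hs₀ : 0 < √γ := sqrt_pos.2 hγ.1
  have hx₀ : 0 < √γ * b := mul_pos hs₀ hb₀
  have hx : √γ * b < π / 2 := by
    have hs₁ : √γ ≤ 1 := sqrt_le_one.2 hγ.2
    nlinarith [pi_gt_three]
  have hD : 0 < besselJ (n - 1) (√γ * b) + b ^ (2 * n) * besselJ (n + 1) (√γ * b) := by
    have := besselJ_pos (n - 1) hx₀ hx
    have := besselJ_pos (n + 1) hx₀ hx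
    positivity
  refine ⟨hD, fun A C h₁ h₂ => ⟨?_, rfl⟩⟩
  have hrec := besselJ_add_besselJ_add_two (n - 1) (√γ * b)
  rw [Nat.sub_add_cancel hn, show n - 1 + 2 = n + 1 by omega, Nat.cast_pred hn,
    sub_add_cancel] at hrec
  exact two_mul_coeff_add_eq_of_matching (by omega) hb₀.ne' hs₀.ne' hD.ne' hrec
    (hasDerivAt_besselJ n hx₀.ne').deriv h₁ h₂
end

section
/- For every r ∈ (0,1), the remainder S_0(r) = J_0(r) − 1 satisfies − r²/4 ≤ S_0(r) ≤ − (r² cos r)/4 ≤ 0. -/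
open Real Set

/-- The remainder `S_n(r) = J_n(r) − r^n/(2^n n!)`. -/
noncomputable def besselS (n : ℕ) (r : ℝ) : ℝ :=
  besselJ n r - r ^ n / (2 ^ n * Nat.factorial n)

/-! With the weight `w(t) = (1 - t²)^(-1/2)`, the identity `Γ(1/2) = √π` gives
`S₀(r) = π⁻¹ ∫_{-1}^{1} (cos(rt) - 1) w(t) dt`, while `∫ w = π` (as `w = arcsin'`) and
`∫ t² w = π/2`. Both bounds therefore follow from bounding `cos(rt) - 1` pointwise by multiples
of `t²`: from below by `1 - x²/2 ≤ cos x`, from above by `cos x - 1 = -2 sin²(x/2)` together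
with `sin² y ≥ y² cos² y ≥ y² cos 2y`. -/

open MeasureTheory intervalIntegral

namespace Real

/-- Equivalently `|y| ≤ |tan y|`. -/
theorem sq_mul_cos_sq_le_sin_sq {y : ℝ} (hy : |y| ≤ π / 2) : y ^ 2 * cos y ^ 2 ≤ sin y ^ 2 := by
  obtain ⟨hy₁, hy₂⟩ := abs_le.mp hy
  have hcos_nonneg : 0 ≤ cos y := cos_nonneg_of_mem_Icc ⟨hy₁, hy₂⟩
  have hcos_le : cos y ≤ 1 / √(y ^ 2 + 1) :=
    cos_le_one_div_sqrt_sq_add_one (by linarith [pi_pos]) (by linarith [pi_pos])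
  have hcos_sq : cos y ^ 2 * (y ^ 2 + 1) ≤ 1 := by
    have := pow_le_pow_left₀ hcos_nonneg hcos_le 2
    rw [div_pow, one_pow, sq_sqrt (by positivity)] at this
    rwa [le_div_iff₀ (by positivity)] at this
  nlinarith [sin_sq_add_cos_sq y]

theorem cos_sub_one_le_of_abs_le {x r : ℝ} (hxr : |x| ≤ r) (hr : r ≤ π) :
    cos x - 1 ≤ -(x ^ 2 * cos r) / 2 := by
  have hcos : cos r ≤ cos x := by
    rw [← cos_abs x]; exact cos_le_cos_of_nonneg_of_le_pi (abs_nonneg x) hr hxr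
  have hhalf : |x / 2| ≤ π / 2 := by rw [abs_div, abs_two]; linarith
  have hdouble : cos x = 2 * cos (x / 2) ^ 2 - 1 := by rw [← cos_two_mul]; ring_nf
  nlinarith [sq_mul_cos_sq_le_sin_sq hhalf, sin_sq_add_cos_sq (x / 2),
    mul_le_mul_of_nonneg_left hcos (sq_nonneg (x / 2))]

end Real

noncomputable def chebyshevWeight (t : ℝ) : ℝ := (1 - t ^ 2) ^ (-(1 / 2) : ℝ)

theorem chebyshevWeight_nonneg {t : ℝ} (ht : t ∈ Icc (-1 : ℝ) 1) : 0 ≤ chebyshevWeight t :=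
  rpow_nonneg (by nlinarith [ht.1, ht.2]) _

theorem hasDerivAt_arcsin_chebyshevWeight {t : ℝ} (ht : t ∈ Ioo (-1 : ℝ) 1) :
    HasDerivAt arcsin (chebyshevWeight t) t := by
  have h : 0 < 1 - t ^ 2 := by nlinarith [ht.1, ht.2]
  convert hasDerivAt_arcsin ht.1.ne' ht.2.ne using 1
  rw [chebyshevWeight, rpow_neg h.le, ← sqrt_eq_rpow, one_div]

theorem intervalIntegrable_chebyshevWeight : IntervalIntegrable chebyshevWeight volume (-1) 1 :=
  intervalIntegrable_deriv_of_nonneg continuous_arcsin.continuousOn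
    (fun t ht => hasDerivAt_arcsin_chebyshevWeight (by simpa using ht))
    (fun t ht => chebyshevWeight_nonneg (Ioo_subset_Icc_self (by simpa using ht)))

theorem integral_chebyshevWeight : ∫ t in (-1 : ℝ)..1, chebyshevWeight t = π := by
  rw [integral_eq_sub_of_hasDerivAt_of_le (by norm_num) continuous_arcsin.continuousOn
    (fun t ht => hasDerivAt_arcsin_chebyshevWeight ht) intervalIntegrable_chebyshevWeight,
    arcsin_one, arcsin_neg_one]
  ring

theorem intervalIntegrable_mul_chebyshevWeight {f : ℝ → ℝ} (hf : ContinuousOn f (Icc (-1) 1)) :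
    IntervalIntegrable (fun t => f t * chebyshevWeight t) volume (-1) 1 :=
  intervalIntegrable_chebyshevWeight.continuousOn_mul (by rwa [uIcc_of_le (by norm_num)])

theorem sq_mul_chebyshevWeight {t : ℝ} (ht : t ∈ Icc (-1 : ℝ) 1) :
    t ^ 2 * chebyshevWeight t = chebyshevWeight t - √(1 - t ^ 2) := by
  have h : 0 ≤ 1 - t ^ 2 := by nlinarith [ht.1, ht.2]
  have hsqrt : √(1 - t ^ 2) = (1 - t ^ 2) * chebyshevWeight t := by
    rw [sqrt_eq_rpow, chebyshevWeight, ← rpow_one_add' h (by norm_num)]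
    norm_num
  rw [hsqrt]; ring

theorem integral_sq_mul_chebyshevWeight :
    ∫ t in (-1 : ℝ)..1, t ^ 2 * chebyshevWeight t = π / 2 := by
  rw [integral_congr (fun t ht => sq_mul_chebyshevWeight (by rwa [uIcc_of_le (by norm_num)] at ht)),
    intervalIntegral.integral_sub intervalIntegrable_chebyshevWeight
      ((by fun_prop : Continuous fun t : ℝ => √(1 - t ^ 2)).intervalIntegrable _ _),
    integral_chebyshevWeight, integral_sqrt_one_sub_sq]
  ring

theorem integral_mul_chebyshevWeight_mono {f g : ℝ → ℝ} (hf : ContinuousOn f (Icc (-1) 1))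
    (hg : ContinuousOn g (Icc (-1) 1)) (hfg : ∀ t ∈ Icc (-1 : ℝ) 1, f t ≤ g t) :
    ∫ t in (-1 : ℝ)..1, f t * chebyshevWeight t ≤ ∫ t in (-1 : ℝ)..1, g t * chebyshevWeight t :=
  integral_mono_on (by norm_num) (intervalIntegrable_mul_chebyshevWeight hf)
    (intervalIntegrable_mul_chebyshevWeight hg)
    (fun t ht => mul_le_mul_of_nonneg_right (hfg t ht) (chebyshevWeight_nonneg ht))

theorem besselS_zero_eq (r : ℝ) :
    besselS 0 r = (∫ t in (-1 : ℝ)..1, (cos (r * t) - 1) * chebyshevWeight t) / π := by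
  have hcont : ContinuousOn (fun t => cos (r * t)) (Icc (-1) 1) := by fun_prop
  have hJ : besselJ 0 r = (∫ t in (-1 : ℝ)..1, cos (r * t) * chebyshevWeight t) / π := by
    simp only [besselJ, chebyshevWeight, Nat.cast_zero, zero_add, zero_sub, pow_zero, one_mul,
      Gamma_one_half_eq, mul_self_sqrt pi_pos.le, one_div_mul_eq_div]
  simp_rw [sub_mul, one_mul]
  rw [besselS, hJ, integral_sub (intervalIntegrable_mul_chebyshevWeight hcont)
    intervalIntegrable_chebyshevWeight, integral_chebyshevWeight]
  field_simp
  simp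

theorem bessel_remainder_zero_bound (r : ℝ) (hr : r ∈ Set.Ioo (0 : ℝ) 1) :
    -(r ^ 2) / 4 ≤ besselS 0 r ∧
      besselS 0 r ≤ -(r ^ 2 * Real.cos r) / 4 ∧
      -(r ^ 2 * Real.cos r) / 4 ≤ 0 := by
  obtain ⟨hr₀, hr₁⟩ := hr
  have hcos_r : 0 ≤ cos r :=
    cos_nonneg_of_mem_Icc ⟨by linarith [pi_gt_three], by linarith [pi_gt_three]⟩
  have hweighted (c : ℝ) : (∫ t in (-1 : ℝ)..1, c * t ^ 2 * chebyshevWeight t) / π = c / 2 := by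
    simp_rw [mul_assoc]
    rw [intervalIntegral.integral_const_mul, integral_sq_mul_chebyshevWeight]
    field_simp
  have hcont : ContinuousOn (fun t => cos (r * t) - 1) (Icc (-1) 1) := by fun_prop
  rw [besselS_zero_eq]
  refine ⟨?_, ?_, by nlinarith⟩
  · calc -(r ^ 2) / 4 = (∫ t in (-1 : ℝ)..1, -(r ^ 2) / 2 * t ^ 2 * chebyshevWeight t) / π := by
          rw [hweighted]; ring
      _ ≤ _ := by
        gcongr
        refine integral_mul_chebyshevWeight_mono (by fun_prop) hcont fun t _ => ?_
        nlinarith [one_sub_sq_div_two_le_cos (x := r * t)]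
  · calc _ ≤ (∫ t in (-1 : ℝ)..1, -(r ^ 2 * cos r) / 2 * t ^ 2 * chebyshevWeight t) / π := by
          gcongr
          refine integral_mul_chebyshevWeight_mono hcont (by fun_prop) fun t ht => ?_
          have hrt : |r * t| ≤ r := by
            rw [abs_mul, abs_of_pos hr₀]
            exact mul_le_of_le_one_right hr₀.le (abs_le.mpr ht)
          linarith [cos_sub_one_le_of_abs_le hrt (by linarith [pi_gt_three])]
      _ = -(r ^ 2 * cos r) / 4 := by rw [hweighted]; ring
end

section
/- For n ∈ {0, 2} and every r ∈ (0,1), ∫_0^1 (1 − cos(r t)) (1−t²)^{n−1/2} dt ≤ π r² / (28n + 8). -/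
/-!
Since `1 - cos x ≤ x² / 2`, the integral is at most `r² / 2 · ∫₀¹ t² (1 - t²)^(n - 1/2) dt`.
These moments are `π / 4` for `n = 0` and `π / 32` for `n = 2`, read off from antiderivatives
built from `arcsin t` and `√(1 - t²)` (the substitution `t = sin θ`).
-/

open Real Set MeasureTheory

theorem integral_one_sub_cos_mul_le {w : ℝ → ℝ} {a b : ℝ} (r : ℝ) (hab : a ≤ b)
    (hw : Measurable w) (hw0 : ∀ t ∈ Icc a b, 0 ≤ w t)
    (hint : IntervalIntegrable (fun t => t ^ 2 * w t) volume a b) :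
    ∫ t in a..b, (1 - cos (r * t)) * w t ≤ r ^ 2 / 2 * ∫ t in a..b, t ^ 2 * w t := by
  have hle : ∀ t ∈ Icc a b, (1 - cos (r * t)) * w t ≤ r ^ 2 / 2 * (t ^ 2 * w t) := fun t ht => by
    nlinarith [one_sub_sq_div_two_le_cos (x := r * t), hw0 t ht]
  have hbound := hint.const_mul (r ^ 2 / 2)
  have hint' : IntervalIntegrable (fun t => (1 - cos (r * t)) * w t) volume a b := by
    refine hbound.mono_fun' (by fun_prop) ?_
    rw [uIoc_of_le hab]
    filter_upwards [ae_restrict_mem measurableSet_Ioc] with t ht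
    have ht' := Ioc_subset_Icc_self ht
    rw [norm_of_nonneg (mul_nonneg (by linarith [cos_le_one (r * t)]) (hw0 t ht'))]
    exact hle t ht'
  rw [← intervalIntegral.integral_const_mul]
  exact intervalIntegral.integral_mono_on hab hint' hbound hle

theorem hasDerivAt_sqrt_one_sub_sq {x : ℝ} (hx : x ∈ Ioo (-1 : ℝ) 1) :
    HasDerivAt (fun t => √(1 - t ^ 2)) (-x / √(1 - x ^ 2)) x := by
  have h : 0 < 1 - x ^ 2 := by nlinarith [hx.1, hx.2]
  refine (((hasDerivAt_pow 2 x).const_sub 1).sqrt h.ne').congr_deriv ?_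
  field_simp
  ring

theorem hasDerivAt_arcsin_sub_mul_sqrt_div_two {x : ℝ} (hx : x ∈ Ioo (-1 : ℝ) 1) :
    HasDerivAt (fun t => (arcsin t - t * √(1 - t ^ 2)) / 2)
      (x ^ 2 * (1 - x ^ 2) ^ (-(1 / 2) : ℝ)) x := by
  have h : 0 < 1 - x ^ 2 := by nlinarith [hx.1, hx.2]
  have hs : √(1 - x ^ 2) ^ 2 = 1 - x ^ 2 := sq_sqrt h.le
  refine (((hasDerivAt_arcsin hx.1.ne' hx.2.ne).sub
    ((hasDerivAt_id' x).mul (hasDerivAt_sqrt_one_sub_sq hx))).div_const 2).congr_deriv ?_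
  rw [rpow_neg h.le, ← sqrt_eq_rpow]
  field_simp
  rw [hs]
  ring

theorem hasDerivAt_arcsin_add_sqrt_mul_poly {x : ℝ} (hx : x ∈ Ioo (-1 : ℝ) 1) :
    HasDerivAt (fun t => arcsin t / 16 + √(1 - t ^ 2) * (-(t / 16) + 7 * t ^ 3 / 24 - t ^ 5 / 6))
      (x ^ 2 * (1 - x ^ 2) ^ (3 / 2 : ℝ)) x := by
  have h : 0 < 1 - x ^ 2 := by nlinarith [hx.1, hx.2]
  have hs : √(1 - x ^ 2) ^ 2 = 1 - x ^ 2 := sq_sqrt h.le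
  have hp : HasDerivAt (fun t : ℝ => -(t / 16) + 7 * t ^ 3 / 24 - t ^ 5 / 6)
      (-(1 / 16) + 7 * (3 * x ^ 2) / 24 - 5 * x ^ 4 / 6) x := by
    refine ((((hasDerivAt_id' x).div_const 16).neg.add
      (((hasDerivAt_pow 3 x).const_mul 7).div_const 24)).sub
      ((hasDerivAt_pow 5 x).div_const 6)).congr_deriv ?_
    norm_num
  refine (((hasDerivAt_arcsin hx.1.ne' hx.2.ne).div_const 16).add
    ((hasDerivAt_sqrt_one_sub_sq hx).mul hp)).congr_deriv ?_
  rw [show (3 / 2 : ℝ) = 1 + 1 / 2 by norm_num, rpow_add h, rpow_one, ← sqrt_eq_rpow]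
  field_simp
  rw [hs]
  ring

theorem intervalIntegrable_sq_mul_one_sub_sq_rpow_neg_half :
    IntervalIntegrable (fun t : ℝ => t ^ 2 * (1 - t ^ 2) ^ (-(1 / 2) : ℝ)) volume 0 1 :=
  intervalIntegral.intervalIntegrable_deriv_of_nonneg (by fun_prop)
    (fun _ hx => hasDerivAt_arcsin_sub_mul_sqrt_div_two
      (by simpa using Ioo_subset_Ioo_left (by norm_num) hx))
    (fun x hx => by
      simp only [zero_le_one, min_eq_left, max_eq_right, mem_Ioo] at hx
      exact mul_nonneg (sq_nonneg x) (rpow_nonneg (by nlinarith) _))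

theorem integral_sq_mul_one_sub_sq_rpow_neg_half :
    ∫ t in (0 : ℝ)..1, t ^ 2 * (1 - t ^ 2) ^ (-(1 / 2) : ℝ) = π / 4 := by
  rw [intervalIntegral.integral_eq_sub_of_hasDerivAt_of_le zero_le_one (by fun_prop)
    (fun _ hx => hasDerivAt_arcsin_sub_mul_sqrt_div_two (Ioo_subset_Ioo_left (by norm_num) hx))
    intervalIntegrable_sq_mul_one_sub_sq_rpow_neg_half]
  norm_num
  ring

theorem intervalIntegrable_sq_mul_one_sub_sq_rpow_three_halves :
    IntervalIntegrable (fun t : ℝ => t ^ 2 * (1 - t ^ 2) ^ (3 / 2 : ℝ)) volume 0 1 :=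
  (by fun_prop (disch := norm_num) :
    Continuous fun t : ℝ => t ^ 2 * (1 - t ^ 2) ^ (3 / 2 : ℝ)).intervalIntegrable _ _

theorem integral_sq_mul_one_sub_sq_rpow_three_halves :
    ∫ t in (0 : ℝ)..1, t ^ 2 * (1 - t ^ 2) ^ (3 / 2 : ℝ) = π / 32 := by
  rw [intervalIntegral.integral_eq_sub_of_hasDerivAt_of_le zero_le_one (by fun_prop)
    (fun _ hx => hasDerivAt_arcsin_add_sqrt_mul_poly (Ioo_subset_Ioo_left (by norm_num) hx))
    intervalIntegrable_sq_mul_one_sub_sq_rpow_three_halves]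
  norm_num
  ring

theorem integral_one_sub_cos_bound_general (n : ℕ) (hn : n = 0 ∨ n = 2) (r : ℝ) :
    ∫ t in (0 : ℝ)..1, (1 - Real.cos (r * t)) * (1 - t ^ 2) ^ ((n : ℝ) - 1 / 2) ≤
      Real.pi * r ^ 2 / (28 * n + 8) := by
  have bound (e : ℝ) := integral_one_sub_cos_mul_le (w := fun t => (1 - t ^ 2) ^ e) r zero_le_one
    (by fun_prop) (fun t ht => rpow_nonneg (by nlinarith [ht.1, ht.2]) e)
  rcases hn with rfl | rfl
  · have h := bound _ intervalIntegrable_sq_mul_one_sub_sq_rpow_neg_half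
    rw [integral_sq_mul_one_sub_sq_rpow_neg_half] at h
    norm_num at h ⊢
    linarith
  · have h := bound _ intervalIntegrable_sq_mul_one_sub_sq_rpow_three_halves
    rw [integral_sq_mul_one_sub_sq_rpow_three_halves] at h
    norm_num at h ⊢
    linarith

theorem integral_one_sub_cos_bound (n : ℕ) (hn : n = 0 ∨ n = 2) (r : ℝ)
    (hr : r ∈ Set.Ioo (0 : ℝ) 1) :
    ∫ t in (0 : ℝ)..1, (1 - Real.cos (r * t)) * (1 - t ^ 2) ^ ((n : ℝ) - 1 / 2) ≤
      Real.pi * r ^ 2 / (28 * n + 8) :=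
  integral_one_sub_cos_bound_general n hn r
end

section
/- For every r ∈ (0,1), r·J_1(r)·log r + J_0(r) ≥ 3/4. -/
open Real Set

/-!
Bounding `cos ≤ 1` in the Poisson integral gives `J₁(r) ≤ r / 2`, and `1 - x² / 2 ≤ cos x` gives
`J₀(r) ≥ 1 - r² / 4`. As `r log r < 0` on `(0, 1)`, the left-hand side is at least
`r² log r / 2 + 1 - r² / 4`, and `x - 1 ≤ x log x` at `x = r²` gives `r² log r ≥ (r² - 1) / 2`.
-/

open intervalIntegral MeasureTheory

lemma hasDerivAt_arcsin_inv_sqrt {x : ℝ} (hx : x ∈ Ioo (-1 : ℝ) 1) :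
    HasDerivAt arcsin (√(1 - x ^ 2))⁻¹ x := by
  simpa only [one_div] using hasDerivAt_arcsin hx.1.ne' hx.2.ne

lemma intervalIntegrable_inv_sqrt_one_sub_sq :
    IntervalIntegrable (fun x : ℝ => (√(1 - x ^ 2))⁻¹) volume (-1) 1 :=
  intervalIntegrable_deriv_of_nonneg continuous_arcsin.continuousOn
    (fun x hx => hasDerivAt_arcsin_inv_sqrt (by norm_num at hx; exact hx))
    (fun x _ => by positivity)

lemma integral_inv_sqrt_one_sub_sq : ∫ x in (-1 : ℝ)..1, (√(1 - x ^ 2))⁻¹ = π := by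
  rw [integral_eq_sub_of_hasDerivAt_of_le (by norm_num) continuous_arcsin.continuousOn
    (fun x hx => hasDerivAt_arcsin_inv_sqrt hx) intervalIntegrable_inv_sqrt_one_sub_sq,
    arcsin_one, arcsin_neg_one]
  ring

lemma sub_one_le_mul_log {x : ℝ} (hx : 0 < x) : x - 1 ≤ x * log x := by
  have h := mul_le_mul_of_nonneg_left (one_sub_inv_le_log_of_pos hx) hx.le
  rwa [mul_sub, mul_one, mul_inv_cancel₀ hx.ne'] at h

lemma besselJ_zero_eq_integral (r : ℝ) :
    besselJ 0 r = π⁻¹ * ∫ t in (-1 : ℝ)..1, cos (r * t) * (√(1 - t ^ 2))⁻¹ := by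
  have hexp : ∀ t ∈ uIcc (-1 : ℝ) 1,
      cos (r * t) * (1 - t ^ 2) ^ (((0 : ℕ) : ℝ) - 1 / 2) = cos (r * t) * (√(1 - t ^ 2))⁻¹ := by
    intro t ht
    rw [uIcc_of_le (by norm_num)] at ht
    have hnonneg : 0 ≤ 1 - t ^ 2 := by nlinarith [ht.1, ht.2]
    rw [show ((0 : ℕ) : ℝ) - 1 / 2 = -(1 / 2) by norm_num, rpow_neg hnonneg, sqrt_eq_rpow]
  rw [besselJ, integral_congr hexp, show ((0 : ℕ) : ℝ) + 1 / 2 = 1 / 2 by norm_num,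
    Gamma_one_half_eq, pow_zero, pow_zero, one_mul, mul_self_sqrt pi_pos.le, one_div]

lemma besselJ_one_eq_integral (r : ℝ) :
    besselJ 1 r = r / π * ∫ t in (-1 : ℝ)..1, cos (r * t) * √(1 - t ^ 2) := by
  rw [besselJ, show ((1 : ℕ) : ℝ) + 1 / 2 = 1 / 2 + 1 by norm_num,
    show ((1 : ℕ) : ℝ) - 1 / 2 = 1 / 2 by norm_num, Gamma_add_one (by norm_num),
    Gamma_one_half_eq]
  simp_rw [← sqrt_eq_rpow]
  field_simp
  rw [sq_sqrt pi_pos.le]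
  ring

lemma besselJ_one_le {r : ℝ} (hr : 0 ≤ r) : besselJ 1 r ≤ r / 2 := by
  have hint : ∫ t in (-1 : ℝ)..1, cos (r * t) * √(1 - t ^ 2) ≤ π / 2 := by
    rw [← integral_sqrt_one_sub_sq]
    refine integral_mono_on (by norm_num) (by apply Continuous.intervalIntegrable; fun_prop)
      (by apply Continuous.intervalIntegrable; fun_prop) fun t _ => ?_
    exact mul_le_of_le_one_left (sqrt_nonneg _) (cos_le_one _)
  calc besselJ 1 r = r / π * ∫ t in (-1 : ℝ)..1, cos (r * t) * √(1 - t ^ 2) :=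
        besselJ_one_eq_integral r
    _ ≤ r / π * (π / 2) := by gcongr
    _ = r / 2 := by field_simp

lemma one_sub_sq_div_four_le_besselJ_zero (r : ℝ) : 1 - r ^ 2 / 4 ≤ besselJ 0 r := by
  have hsqrt : IntervalIntegrable (fun t : ℝ => √(1 - t ^ 2)) volume (-1) 1 := by
    apply Continuous.intervalIntegrable; fun_prop
  have hpointwise : ∀ t ∈ Icc (-1 : ℝ) 1,
      (1 - r ^ 2 / 2) * (√(1 - t ^ 2))⁻¹ + r ^ 2 / 2 * √(1 - t ^ 2)
        ≤ cos (r * t) * (√(1 - t ^ 2))⁻¹ := by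
    intro t _
    have hsqrt_eq : √(1 - t ^ 2) = (1 - t ^ 2) * (√(1 - t ^ 2))⁻¹ := div_sqrt.symm
    calc (1 - r ^ 2 / 2) * (√(1 - t ^ 2))⁻¹ + r ^ 2 / 2 * √(1 - t ^ 2)
        = (1 - (r * t) ^ 2 / 2) * (√(1 - t ^ 2))⁻¹ := by linear_combination r ^ 2 / 2 * hsqrt_eq
      _ ≤ cos (r * t) * (√(1 - t ^ 2))⁻¹ :=
        mul_le_mul_of_nonneg_right one_sub_sq_div_two_le_cos (by positivity)
  have hint : π * (1 - r ^ 2 / 4) ≤ ∫ t in (-1 : ℝ)..1, cos (r * t) * (√(1 - t ^ 2))⁻¹ := by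
    have := integral_mono_on (by norm_num)
      ((intervalIntegrable_inv_sqrt_one_sub_sq.const_mul _).add (hsqrt.const_mul _))
      (intervalIntegrable_inv_sqrt_one_sub_sq.continuousOn_mul (by fun_prop)) hpointwise
    rw [integral_add (intervalIntegrable_inv_sqrt_one_sub_sq.const_mul _) (hsqrt.const_mul _),
      intervalIntegral.integral_const_mul, intervalIntegral.integral_const_mul,
      integral_inv_sqrt_one_sub_sq, integral_sqrt_one_sub_sq] at this
    linarith
  rw [besselJ_zero_eq_integral]
  calc 1 - r ^ 2 / 4 = π⁻¹ * (π * (1 - r ^ 2 / 4)) := by field_simp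
    _ ≤ _ := by gcongr

theorem denominator_lower_bound (r : ℝ) (hr : r ∈ Set.Ioo (0 : ℝ) 1) :
    r * besselJ 1 r * Real.log r + besselJ 0 r ≥ 3 / 4 := by
  obtain ⟨hr0, hr1⟩ := hr
  have hrlog : r * log r ≤ 0 := mul_nonpos_of_nonneg_of_nonpos hr0.le (log_nonpos hr0.le hr1.le)
  have hJ1 : r * (r / 2) * log r ≤ r * besselJ 1 r * log r := by
    nlinarith [besselJ_one_le hr0.le]
  have hlog : r ^ 2 - 1 ≤ 2 * r ^ 2 * log r := by
    have := sub_one_le_mul_log (pow_pos hr0 2)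
    rwa [log_pow, Nat.cast_ofNat, mul_left_comm, ← mul_assoc] at this
  linarith [one_sub_sq_div_four_le_besselJ_zero r]
end

section
/- There exists a constant C > 0 such that for all b, b' ∈ (0,1), |c_0(b,1) − c_0(b',1)| ≤ C |b − b'|, where c_0(b,1) = − b J_1(b) / ( b (log b) J_1(b) + J_0(b) ). -/
open Real Set

/-- The zeroth eigenvalue of the Dirichlet-to-Neumann map for the one-step radial
potential `q = χ_{(0,b)}(|x|)` (i.e. `γ = 1`) on the unit disk. -/
noncomputable def c0 (b : ℝ) : ℝ :=
  -(b * besselJ 1 b) / (b * Real.log b * besselJ 1 b + besselJ 0 b)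

section C0AuxSection

open MeasureTheory intervalIntegral

namespace C0Aux


noncomputable def w (t : ℝ) : ℝ := (1 - t ^ 2) ^ (-(1 / 2) : ℝ)
noncomputable def v (t : ℝ) : ℝ := (1 - t ^ 2) ^ ((1 : ℝ) / 2)
noncomputable def g (t : ℝ) : ℝ := (1 - t) ^ (-(1 / 2) : ℝ) + (1 + t) ^ (-(1 / 2) : ℝ)

lemma cos_diff (x y : ℝ) : |Real.cos x - Real.cos y| ≤ |x - y| := by
  rw [Real.cos_sub_cos]
  have h1 : |Real.sin ((x + y) / 2)| ≤ 1 := Real.abs_sin_le_one _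
  have h2 : |Real.sin ((x - y) / 2)| ≤ |(x - y) / 2| := Real.abs_sin_le_abs
  have h3 : |(x - y) / 2| = |x - y| / 2 := abs_div _ 2 |>.trans (by rw [abs_two])
  calc |(-2) * Real.sin ((x + y) / 2) * Real.sin ((x - y) / 2)|
      = 2 * (|Real.sin ((x + y) / 2)| * |Real.sin ((x - y) / 2)|) := by
        rw [abs_mul, abs_mul]; simp [mul_assoc]
    _ ≤ 2 * (1 * (|x - y| / 2)) := by
        rw [h3] at h2
        gcongr
    _ = |x - y| := by ring

lemma measurable_rpow_const (c : ℝ) : Measurable fun x : ℝ => x ^ c := by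
  have heq : (fun x : ℝ => x ^ c) = fun x =>
      if x = 0 then (if c = 0 then 1 else 0)
      else Real.exp (Real.log x * c) * (if x < 0 then Real.cos (c * π) else 1) := by
    funext x
    rcases lt_trichotomy x 0 with h | h | h
    · rw [if_neg h.ne, if_pos h, Real.rpow_def_of_neg h, mul_comm c π]
    · subst h
      rcases eq_or_ne c 0 with hc | hc
      · simp [hc]
      · simp [hc, Real.zero_rpow hc]
    · rw [if_neg h.ne', if_neg (not_lt.2 h.le), mul_one, Real.rpow_def_of_pos h]
  rw [heq]
  apply Measurable.ite ((isClosed_eq continuous_id continuous_const).measurableSet)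
    measurable_const
  exact ((Real.measurable_log.mul measurable_const).exp).mul
    (Measurable.ite (measurableSet_lt measurable_id measurable_const) measurable_const
      measurable_const)

lemma w_meas : Measurable w := by
  have h : Measurable fun t : ℝ => 1 - t ^ 2 := by measurability
  exact (measurable_rpow_const _).comp h

lemma w_nonneg {t : ℝ} (ht : t ∈ Icc (-1 : ℝ) 1) : 0 ≤ w t :=
  Real.rpow_nonneg (by nlinarith [ht.1, ht.2]) _

lemma g_nonneg {t : ℝ} (ht : t ∈ Icc (-1 : ℝ) 1) : 0 ≤ g t :=
  add_nonneg (Real.rpow_nonneg (by linarith [ht.2]) _) (Real.rpow_nonneg (by linarith [ht.1]) _)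

lemma w_le_g {t : ℝ} (ht : t ∈ Icc (-1 : ℝ) 1) : w t ≤ g t := by
  obtain ⟨h1, h2⟩ := ht
  rcases eq_or_lt_of_le h2 with h | h
  · have hw : w t = 0 := by
      rw [h]
      unfold w
      rw [show (1:ℝ) - 1 ^ 2 = 0 by norm_num, Real.zero_rpow (by norm_num)]
    rw [hw]; exact g_nonneg ⟨h1, h2⟩
  rcases eq_or_lt_of_le h1 with h1' | h1'
  · have hw : w t = 0 := by
      rw [← h1']
      unfold w
      rw [show (1:ℝ) - (-1) ^ 2 = 0 by norm_num, Real.zero_rpow (by norm_num)]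
    rw [hw]; exact g_nonneg ⟨h1, h2⟩
  rcases le_or_gt 0 t with h0 | h0
  · have hb : (0:ℝ) < 1 - t := by linarith
    have hle : 1 - t ≤ 1 - t ^ 2 := by nlinarith
    have := Real.rpow_le_rpow_of_nonpos hb hle (by norm_num : (-(1/2) : ℝ) ≤ 0)
    have h2nn : (0:ℝ) ≤ (1 + t) ^ (-(1 / 2) : ℝ) := Real.rpow_nonneg (by linarith) _
    simp only [w, g]; linarith
  · have hb : (0:ℝ) < 1 + t := by linarith
    have hle : 1 + t ≤ 1 - t ^ 2 := by nlinarith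
    have := Real.rpow_le_rpow_of_nonpos hb hle (by norm_num : (-(1/2) : ℝ) ≤ 0)
    have h1nn : (0:ℝ) ≤ (1 - t) ^ (-(1 / 2) : ℝ) := Real.rpow_nonneg (by linarith) _
    simp only [w, g]; linarith

lemma g1_int : IntervalIntegrable (fun t : ℝ => (1 - t) ^ (-(1 / 2) : ℝ)) volume (-1) 1 := by
  have h := (intervalIntegrable_rpow' (by norm_num : (-1:ℝ) < -(1/2)) (a := 0) (b := 2)).comp_sub_left 1
  have h2 := h.symm
  norm_num at h2
  exact h2

lemma g2_int : IntervalIntegrable (fun t : ℝ => (1 + t) ^ (-(1 / 2) : ℝ)) volume (-1) 1 := by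
  have h := (intervalIntegrable_rpow' (by norm_num : (-1:ℝ) < -(1/2)) (a := 0) (b := 2)).comp_sub_right (-1)
  norm_num [sub_neg_eq_add] at h
  simpa [add_comm] using h

lemma g_int : IntervalIntegrable g volume (-1) 1 := g1_int.add g2_int

lemma w_int : IntervalIntegrable w volume (-1) 1 := by
  apply g_int.mono_fun (w_meas.aestronglyMeasurable)
  rw [uIoc_of_le (by norm_num : (-1:ℝ) ≤ 1)]
  refine (ae_restrict_iff' measurableSet_Ioc).2 (Filter.Eventually.of_forall fun t ht => ?_)
  have ht' : t ∈ Icc (-1:ℝ) 1 := ⟨ht.1.le, ht.2⟩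
  show ‖w t‖ ≤ ‖g t‖
  rw [Real.norm_eq_abs, Real.norm_eq_abs, abs_of_nonneg (w_nonneg ht'), abs_of_nonneg (g_nonneg ht')]
  exact w_le_g ht'






noncomputable def Af (b : ℝ) : ℝ := ∫ t in (-1:ℝ)..1, Real.cos (b * t) * v t
noncomputable def Bf (b : ℝ) : ℝ := ∫ t in (-1:ℝ)..1, Real.cos (b * t) * w t

lemma rpow_half_le : (2:ℝ) ^ ((1:ℝ)/2) ≤ 3/2 := by
  have h : ((2:ℝ) ^ ((1:ℝ)/2)) ^ (2:ℕ) = 2 := by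
    rw [← Real.rpow_natCast ((2:ℝ) ^ ((1:ℝ)/2)) 2, ← Real.rpow_mul (by norm_num)]
    norm_num
  nlinarith [Real.rpow_nonneg (show (0:ℝ) ≤ 2 by norm_num) ((1:ℝ)/2)]

lemma I1_eq : (∫ t in (-1:ℝ)..1, (1 - t) ^ (-(1/2) : ℝ)) = 2 * (2:ℝ) ^ ((1:ℝ)/2) := by
  rw [show (fun t : ℝ => (1 - t) ^ (-(1/2) : ℝ)) = (fun t : ℝ => ((fun x : ℝ => x ^ (-(1/2):ℝ)) (1 - t))) from rfl,
    intervalIntegral.integral_comp_sub_left (fun x : ℝ => x ^ (-(1/2):ℝ)) 1]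
  norm_num
  rw [integral_rpow (Or.inl (by norm_num))]
  rw [Real.zero_rpow (by norm_num)]
  norm_num
  ring

lemma I2_eq : (∫ t in (-1:ℝ)..1, (1 + t) ^ (-(1/2) : ℝ)) = 2 * (2:ℝ) ^ ((1:ℝ)/2) := by
  have h := intervalIntegral.integral_comp_add_right (a := (-1:ℝ)) (b := 1) (fun x : ℝ => x ^ (-(1/2):ℝ)) 1
  simp only [add_comm (1:ℝ)]
  rw [h]
  norm_num
  rw [integral_rpow (Or.inl (by norm_num))]
  rw [Real.zero_rpow (by norm_num)]
  norm_num
  ring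

lemma intW_le : (∫ t in (-1:ℝ)..1, w t) ≤ 6 := by
  have h1 : (∫ t in (-1:ℝ)..1, w t) ≤ ∫ t in (-1:ℝ)..1, g t :=
    integral_mono_on (by norm_num) w_int g_int (fun t ht => w_le_g ht)
  have h2 : (∫ t in (-1:ℝ)..1, g t) = 4 * (2:ℝ) ^ ((1:ℝ)/2) := by
    unfold g
    rw [integral_add g1_int g2_int, I1_eq, I2_eq]; ring
  nlinarith [rpow_half_le]

lemma intW_ge : (2:ℝ) ≤ ∫ t in (-1:ℝ)..1, w t := by
  have hnull : volume ({-1,1} : Set ℝ) = 0 := by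
    have : ({-1,1} : Set ℝ) = {-1} ∪ {1} := rfl
    rw [this]
    exact measure_union_null (measure_singleton _) (measure_singleton _)
  have hae : ∀ᵐ t : ℝ ∂volume, t ∉ ({-1,1} : Set ℝ) :=
    MeasureTheory.compl_mem_ae_iff.2 hnull
  have hone : ∀ᵐ t ∂(volume.restrict (Icc (-1:ℝ) 1)), (1:ℝ) ≤ w t := by
    filter_upwards [ae_restrict_mem measurableSet_Icc, ae_restrict_of_ae hae] with t ht hts
    have h1 : -1 < t := lt_of_le_of_ne ht.1 (by intro h; exact hts (by simp [← h]))
    have h2 : t < 1 := lt_of_le_of_ne ht.2 (by intro h; exact hts (by simp [h]))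
    have hpos : 0 < 1 - t ^ 2 := by nlinarith
    have hle1 : 1 - t ^ 2 ≤ 1 := by nlinarith
    exact Real.one_le_rpow_of_pos_of_le_one_of_nonpos hpos hle1 (by norm_num)
  have := intervalIntegral.integral_mono_ae_restrict (by norm_num : (-1:ℝ) ≤ 1)
    intervalIntegrable_const w_int hone
  norm_num at this
  convert this using 2

lemma v_cont : Continuous v :=
  Continuous.rpow_const (by continuity) (fun x => Or.inr (by norm_num))

lemma v_mem {t : ℝ} (ht : t ∈ Icc (-1 : ℝ) 1) : 0 ≤ v t ∧ v t ≤ 1 :=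
  ⟨Real.rpow_nonneg (by nlinarith [ht.1, ht.2]) _,
   Real.rpow_le_one (by nlinarith [ht.1, ht.2]) (by nlinarith [ht.1, ht.2]) (by norm_num)⟩

lemma fA_int (b : ℝ) : IntervalIntegrable (fun t => Real.cos (b * t) * v t) volume (-1) 1 :=
  ((Real.continuous_cos.comp (continuous_const.mul continuous_id)).mul v_cont).intervalIntegrable _ _

lemma fB_int (b : ℝ) : IntervalIntegrable (fun t => Real.cos (b * t) * w t) volume (-1) 1 := by
  apply w_int.mono_fun
    (((Real.continuous_cos.comp (continuous_const.mul continuous_id)).aestronglyMeasurable).mul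
      w_meas.aestronglyMeasurable)
  rw [uIoc_of_le (by norm_num : (-1:ℝ) ≤ 1)]
  refine (ae_restrict_iff' measurableSet_Ioc).2 (Filter.Eventually.of_forall fun t ht => ?_)
  have ht' : t ∈ Icc (-1:ℝ) 1 := ⟨ht.1.le, ht.2⟩
  show ‖Real.cos (b * t) * w t‖ ≤ ‖w t‖
  rw [Real.norm_eq_abs, Real.norm_eq_abs, abs_mul]
  calc |Real.cos (b * t)| * |w t| ≤ 1 * |w t| := by
        apply mul_le_mul_of_nonneg_right (Real.abs_cos_le_one _) (abs_nonneg _)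
    _ = |w t| := one_mul _

lemma Af_abs (b : ℝ) : |Af b| ≤ 2 := by
  have := intervalIntegral.norm_integral_le_of_norm_le_const
    (a := (-1:ℝ)) (b := 1) (C := 1) (f := fun t => Real.cos (b * t) * v t) ?_
  · rw [Real.norm_eq_abs] at this
    calc |Af b| ≤ 1 * |(1:ℝ) - -1| := this
      _ = 2 := by norm_num
  · intro t ht
    rw [uIoc_of_le (by norm_num : (-1:ℝ) ≤ 1)] at ht
    have ht' : t ∈ Icc (-1:ℝ) 1 := ⟨ht.1.le, ht.2⟩
    rw [Real.norm_eq_abs, abs_mul]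
    have hv := v_mem ht'
    calc |Real.cos (b * t)| * |v t| ≤ 1 * 1 := by
          apply mul_le_mul (Real.abs_cos_le_one _) _ (abs_nonneg _) (by norm_num)
          rw [abs_of_nonneg hv.1]; exact hv.2
      _ = 1 := by norm_num

lemma Af_lip (b b' : ℝ) : |Af b - Af b'| ≤ 2 * |b - b'| := by
  have hsub : Af b - Af b' = ∫ t in (-1:ℝ)..1, (Real.cos (b * t) - Real.cos (b' * t)) * v t := by
    unfold Af
    rw [← intervalIntegral.integral_sub (fA_int b) (fA_int b')]
    congr 1; funext t; ring
  rw [hsub]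
  have := intervalIntegral.norm_integral_le_of_norm_le_const
    (a := (-1:ℝ)) (b := 1) (C := |b - b'|)
    (f := fun t => (Real.cos (b * t) - Real.cos (b' * t)) * v t) ?_
  · rw [Real.norm_eq_abs] at this
    calc |∫ t in (-1:ℝ)..1, (Real.cos (b * t) - Real.cos (b' * t)) * v t|
        ≤ |b - b'| * |(1:ℝ) - -1| := this
      _ = 2 * |b - b'| := by rw [show |(1:ℝ) - -1| = 2 by norm_num]; ring
  · intro t ht
    rw [uIoc_of_le (by norm_num : (-1:ℝ) ≤ 1)] at ht
    have ht' : t ∈ Icc (-1:ℝ) 1 := ⟨ht.1.le, ht.2⟩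
    rw [Real.norm_eq_abs, abs_mul]
    have hv := v_mem ht'
    have hcos : |Real.cos (b * t) - Real.cos (b' * t)| ≤ |b - b'| := by
      calc |Real.cos (b * t) - Real.cos (b' * t)| ≤ |b * t - b' * t| := cos_diff _ _
        _ = |b - b'| * |t| := by rw [← abs_mul]; ring_nf
        _ ≤ |b - b'| * 1 := by
            apply mul_le_mul_of_nonneg_left _ (abs_nonneg _)
            rw [abs_le]; exact ⟨ht'.1, ht'.2⟩
        _ = |b - b'| := mul_one _
    calc |Real.cos (b * t) - Real.cos (b' * t)| * |v t| ≤ |b - b'| * 1 := by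
          apply mul_le_mul hcos _ (abs_nonneg _) (abs_nonneg _)
          rw [abs_of_nonneg hv.1]; exact hv.2
      _ = |b - b'| := mul_one _

lemma Bf_abs (b : ℝ) : |Bf b| ≤ 6 := by
  have h1 : |Bf b| ≤ ∫ t in (-1:ℝ)..1, |Real.cos (b * t) * w t| :=
    intervalIntegral.abs_integral_le_integral_abs (by norm_num)
  have h2 : (∫ t in (-1:ℝ)..1, |Real.cos (b * t) * w t|) ≤ ∫ t in (-1:ℝ)..1, w t := by
    apply integral_mono_on (by norm_num) _ w_int
    · intro t ht
      rw [abs_mul, abs_of_nonneg (w_nonneg ht)]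
      calc |Real.cos (b * t)| * w t ≤ 1 * w t :=
            mul_le_mul_of_nonneg_right (Real.abs_cos_le_one _) (w_nonneg ht)
        _ = w t := one_mul _
    · simpa [Real.norm_eq_abs, abs_mul] using (fB_int b).norm
  linarith [intW_le]

lemma Bf_lip (b b' : ℝ) : |Bf b - Bf b'| ≤ 6 * |b - b'| := by
  have hsub : Bf b - Bf b' = ∫ t in (-1:ℝ)..1, (Real.cos (b * t) - Real.cos (b' * t)) * w t := by
    unfold Bf
    rw [← intervalIntegral.integral_sub (fB_int b) (fB_int b')]
    congr 1; funext t; ring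
  have hint : IntervalIntegrable (fun t => (Real.cos (b * t) - Real.cos (b' * t)) * w t) volume (-1) 1 := by
    have := (fB_int b).sub (fB_int b')
    convert this using 1
    funext t; ring
  have h1 : |Bf b - Bf b'| ≤ ∫ t in (-1:ℝ)..1, |(Real.cos (b * t) - Real.cos (b' * t)) * w t| := by
    rw [hsub]
    exact intervalIntegral.abs_integral_le_integral_abs (by norm_num)
  have h2 : (∫ t in (-1:ℝ)..1, |(Real.cos (b * t) - Real.cos (b' * t)) * w t|)
      ≤ ∫ t in (-1:ℝ)..1, |b - b'| * w t := by
    apply integral_mono_on (by norm_num) _ (w_int.const_mul _)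
    · intro t ht
      rw [abs_mul, abs_of_nonneg (w_nonneg ht)]
      apply mul_le_mul_of_nonneg_right _ (w_nonneg ht)
      calc |Real.cos (b * t) - Real.cos (b' * t)| ≤ |b * t - b' * t| := cos_diff _ _
        _ = |b - b'| * |t| := by rw [← abs_mul]; ring_nf
        _ ≤ |b - b'| * 1 := by
            apply mul_le_mul_of_nonneg_left _ (abs_nonneg _)
            rw [abs_le]; exact ⟨ht.1, ht.2⟩
        _ = |b - b'| := mul_one _
    · simpa [Real.norm_eq_abs, abs_mul] using hint.norm
  have h3 : (∫ t in (-1:ℝ)..1, |b - b'| * w t) = |b - b'| * ∫ t in (-1:ℝ)..1, w t :=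
    intervalIntegral.integral_const_mul _ _
  have h4 : |b - b'| * (∫ t in (-1:ℝ)..1, w t) ≤ |b - b'| * 6 :=
    mul_le_mul_of_nonneg_left intW_le (abs_nonneg _)
  linarith [h1, h2]

lemma Bf_lower {b : ℝ} (hb : b ∈ Ioo (0:ℝ) 1) : 1 ≤ Bf b := by
  have hmono : (∫ t in (-1:ℝ)..1, (1/2 : ℝ) * w t) ≤ Bf b := by
    apply integral_mono_on (by norm_num) (w_int.const_mul _) (fB_int b)
    intro t ht
    apply mul_le_mul_of_nonneg_right _ (w_nonneg ht)
    have h1 : (b * t) ^ 2 ≤ 1 := by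
      have ht2 : t ^ 2 ≤ 1 := by nlinarith [ht.1, ht.2]
      have hb2 : b ^ 2 ≤ 1 := by nlinarith [hb.1, hb.2]
      rw [mul_pow]
      nlinarith [sq_nonneg t, sq_nonneg b]
    calc (1/2 : ℝ) ≤ 1 - (b * t) ^ 2 / 2 := by linarith
      _ ≤ Real.cos (b * t) := Real.one_sub_sq_div_two_le_cos
  have heq : (∫ t in (-1:ℝ)..1, (1/2 : ℝ) * w t) = (1/2 : ℝ) * ∫ t in (-1:ℝ)..1, w t :=
    intervalIntegral.integral_const_mul _ _
  have := intW_ge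
  rw [heq] at hmono
  linarith





lemma psi_bound {x : ℝ} (hx0 : 0 < x) (hx1 : x < 1) : |x ^ 2 * Real.log x| ≤ 1 / 4 := by
  set s := Real.sqrt x with hs
  have hs0 : 0 < s := Real.sqrt_pos.2 hx0
  have hs1 : s < 1 := by
    rw [hs, show (1:ℝ) = Real.sqrt 1 by simp]
    exact Real.sqrt_lt_sqrt hx0.le hx1
  have hsx : s ^ 2 = x := Real.sq_sqrt hx0.le
  have hlog : Real.log x = 2 * Real.log s := by
    rw [hs, Real.log_sqrt hx0.le]; ring
  have hls : -Real.log s ≤ 1 / s - 1 := by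
    have h := Real.log_le_sub_one_of_pos (show (0:ℝ) < 1/s by positivity)
    rw [Real.log_div one_ne_zero hs0.ne', Real.log_one] at h
    linarith
  have hlneg : Real.log x < 0 := Real.log_neg hx0 hx1
  rw [abs_of_nonpos (by nlinarith [sq_nonneg x] : x ^ 2 * Real.log x ≤ 0)]
  have key : -(x ^ 2 * Real.log x) ≤ 2 * s ^ 3 - 2 * s ^ 4 := by
    have hx2 : x ^ 2 = s ^ 4 := by rw [← hsx]; ring
    have h2 : -(x ^ 2 * Real.log x) = 2 * s ^ 4 * (-Real.log s) := by rw [hlog, hx2]; ring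
    rw [h2]
    calc 2 * s ^ 4 * (-Real.log s) ≤ 2 * s ^ 4 * (1/s - 1) :=
          mul_le_mul_of_nonneg_left hls (by positivity)
      _ = 2 * s ^ 3 - 2 * s ^ 4 := by field_simp
  nlinarith [sq_nonneg (s - 3/4), sq_nonneg s, sq_nonneg (s * (s - 3/4)), hs0.le, hs1.le]

lemma xlog_bound {x : ℝ} (hx0 : 0 < x) (hx1 : x < 1) : |x * Real.log x| ≤ 1 / 2 := by
  set s := Real.sqrt x with hs
  have hs0 : 0 < s := Real.sqrt_pos.2 hx0
  have hs1 : s < 1 := by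
    rw [hs, show (1:ℝ) = Real.sqrt 1 by simp]
    exact Real.sqrt_lt_sqrt hx0.le hx1
  have hsx : s ^ 2 = x := Real.sq_sqrt hx0.le
  have hlog : Real.log x = 2 * Real.log s := by
    rw [hs, Real.log_sqrt hx0.le]; ring
  have hls : -Real.log s ≤ 1 / s - 1 := by
    have h := Real.log_le_sub_one_of_pos (show (0:ℝ) < 1/s by positivity)
    rw [Real.log_div one_ne_zero hs0.ne', Real.log_one] at h
    linarith
  have hlneg : Real.log x < 0 := Real.log_neg hx0 hx1
  rw [abs_of_nonpos (by nlinarith : x * Real.log x ≤ 0)]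
  have key : -(x * Real.log x) ≤ 2 * s - 2 * s ^ 2 := by
    have h2 : -(x * Real.log x) = 2 * s ^ 2 * (-Real.log s) := by rw [hlog, ← hsx]; ring
    rw [h2]
    calc 2 * s ^ 2 * (-Real.log s) ≤ 2 * s ^ 2 * (1/s - 1) :=
          mul_le_mul_of_nonneg_left hls (by positivity)
      _ = 2 * s - 2 * s ^ 2 := by field_simp
  nlinarith [sq_nonneg (2 * s - 1)]

lemma psi_lip {x y : ℝ} (hx : x ∈ Ioo (0:ℝ) 1) (hy : y ∈ Ioo (0:ℝ) 1) :
    |x ^ 2 * Real.log x - y ^ 2 * Real.log y| ≤ 2 * |x - y| := by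
  have hderiv : ∀ z ∈ Ioo (0:ℝ) 1,
      HasDerivWithinAt (fun u => u ^ 2 * Real.log u) (2 * z * Real.log z + z) (Ioo (0:ℝ) 1) z := by
    intro z hz
    have hp : HasDerivAt (fun u : ℝ => u ^ 2) (2 * z) z := by simpa using hasDerivAt_pow 2 z
    have hl : HasDerivAt Real.log z⁻¹ z := Real.hasDerivAt_log hz.1.ne'
    have := hp.mul hl
    have hz0 : z ≠ 0 := hz.1.ne'
    have heq : 2 * z * Real.log z + z ^ 2 * z⁻¹ = 2 * z * Real.log z + z := by
      field_simp [hz0, sq]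
    rw [← heq]
    exact this.hasDerivWithinAt
  have hbound : ∀ z ∈ Ioo (0:ℝ) 1, ‖2 * z * Real.log z + z‖ ≤ 2 := by
    intro z hz
    have h1 := xlog_bound hz.1 hz.2
    have h2 : |z| ≤ 1 := by rw [abs_of_pos hz.1]; exact hz.2.le
    calc ‖2 * z * Real.log z + z‖ ≤ |2 * z * Real.log z| + |z| := abs_add_le _ _
      _ = 2 * |z * Real.log z| + |z| := by rw [show 2 * z * Real.log z = 2 * (z * Real.log z) by ring, abs_mul, abs_two]
      _ ≤ 2 * (1/2) + 1 := by linarith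
      _ = 2 := by norm_num
  have := (convex_Ioo (0:ℝ) 1).norm_image_sub_le_of_norm_hasDerivWithin_le hderiv hbound hy hx
  simpa [Real.norm_eq_abs] using this

lemma besselJ_zero (b : ℝ) : besselJ 0 b = Bf b / π := by
  unfold besselJ Bf w
  simp only [Nat.cast_zero, pow_zero, zero_add, zero_sub]
  rw [Real.Gamma_one_half_eq, one_mul, Real.mul_self_sqrt Real.pi_pos.le]
  rw [one_div, inv_mul_eq_div]

lemma besselJ_one (b : ℝ) : besselJ 1 b = b * Af b / π := by
  unfold besselJ Af v
  simp only [Nat.cast_one, pow_one]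
  rw [show (1:ℝ) - 1/2 = 1/2 by norm_num]
  rw [show (1:ℝ) + 1/2 = 1/2 + 1 by ring, Real.Gamma_add_one (by norm_num), Real.Gamma_one_half_eq]
  rw [show (2:ℝ) * (1/2 * Real.sqrt π) * Real.sqrt π = π by
    rw [show (2:ℝ) * (1/2 * Real.sqrt π) * Real.sqrt π = Real.sqrt π * Real.sqrt π by ring,
      Real.mul_self_sqrt Real.pi_pos.le]]
  rw [div_mul_eq_mul_div]

noncomputable def Nf (b : ℝ) : ℝ := -(b ^ 2 * Af b)
noncomputable def Df (b : ℝ) : ℝ := b ^ 2 * Real.log b * Af b + Bf b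

lemma Df_lower {b : ℝ} (hb : b ∈ Ioo (0:ℝ) 1) : 1/2 ≤ Df b := by
  have h1 := psi_bound hb.1 hb.2
  have h2 := Af_abs b
  have h3 := Bf_lower hb
  have h4 : |b ^ 2 * Real.log b * Af b| ≤ 1/2 := by
    rw [abs_mul]
    calc |b ^ 2 * Real.log b| * |Af b| ≤ (1/4) * 2 :=
          mul_le_mul h1 h2 (abs_nonneg _) (by norm_num)
      _ = 1/2 := by norm_num
  have h5 := neg_abs_le (b ^ 2 * Real.log b * Af b)
  unfold Df
  linarith

lemma c0_eq {b : ℝ} (hb : b ∈ Ioo (0:ℝ) 1) : c0 b = Nf b / Df b := by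
  have hD : Df b ≠ 0 := by have := Df_lower hb; linarith
  have hπ : (π:ℝ) ≠ 0 := Real.pi_ne_zero
  unfold c0
  rw [besselJ_zero, besselJ_one]
  have hden : b * Real.log b * (b * Af b / π) + Bf b / π = Df b / π := by
    unfold Df; ring
  have hnum : -(b * (b * Af b / π)) = Nf b / π := by
    unfold Nf; ring
  rw [hden, hnum]
  field_simp

end C0Aux

end C0AuxSection

open C0Aux MeasureTheory intervalIntegral in
theorem c0_lipschitz :
    ∃ C > 0, ∀ b ∈ Set.Ioo (0 : ℝ) 1, ∀ b' ∈ Set.Ioo (0 : ℝ) 1,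
      |c0 b - c0 b'| ≤ C * |b - b'| := by
  refine ⟨1000, by norm_num, ?_⟩
  intro b hb b' hb'
  rw [c0_eq hb, c0_eq hb']
  set Δ := |b - b'| with hΔ
  have hΔ0 : 0 ≤ Δ := abs_nonneg _
  have hDb := Df_lower hb
  have hDb' := Df_lower hb'
  have hb2 : |b ^ 2| ≤ 1 := by
    rw [abs_of_nonneg (sq_nonneg b)]; nlinarith [hb.1, hb.2]
  have hsq : |b ^ 2 - b' ^ 2| ≤ 2 * Δ := by
    rw [show b ^ 2 - b' ^ 2 = (b + b') * (b - b') by ring, abs_mul]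
    have : |b + b'| ≤ 2 := by
      rw [abs_of_pos (by linarith [hb.1, hb'.1])]; linarith [hb.2, hb'.2]
    exact mul_le_mul_of_nonneg_right this (abs_nonneg _)
  -- Nf bounds
  have hNabs : |Nf b| ≤ 2 := by
    unfold Nf
    rw [abs_neg, abs_mul]
    calc |b ^ 2| * |Af b| ≤ 1 * 2 := mul_le_mul hb2 (Af_abs b) (abs_nonneg _) (by norm_num)
      _ = 2 := by norm_num
  have hNlip : |Nf b - Nf b'| ≤ 6 * Δ := by
    have key : Nf b - Nf b' = -(b ^ 2 * (Af b - Af b') + Af b' * (b ^ 2 - b' ^ 2)) := by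
      unfold Nf; ring
    rw [key, abs_neg]
    have t1 : |b ^ 2 * (Af b - Af b')| ≤ 1 * (2 * Δ) := by
      rw [abs_mul]; exact mul_le_mul hb2 (Af_lip b b') (abs_nonneg _) (by norm_num)
    have t2 : |Af b' * (b ^ 2 - b' ^ 2)| ≤ 2 * (2 * Δ) := by
      rw [abs_mul]; exact mul_le_mul (Af_abs b') hsq (abs_nonneg _) (by norm_num)
    calc |b ^ 2 * (Af b - Af b') + Af b' * (b ^ 2 - b' ^ 2)|
        ≤ |b ^ 2 * (Af b - Af b')| + |Af b' * (b ^ 2 - b' ^ 2)| := abs_add_le _ _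
      _ ≤ 1 * (2 * Δ) + 2 * (2 * Δ) := by linarith
      _ = 6 * Δ := by ring
  -- Df bounds
  have hDabs : |Df b| ≤ 7 := by
    unfold Df
    have t1 : |b ^ 2 * Real.log b * Af b| ≤ 1/2 := by
      rw [abs_mul]
      calc |b ^ 2 * Real.log b| * |Af b| ≤ (1/4) * 2 :=
            mul_le_mul (psi_bound hb.1 hb.2) (Af_abs b) (abs_nonneg _) (by norm_num)
        _ = 1/2 := by norm_num
    calc |b ^ 2 * Real.log b * Af b + Bf b| ≤ |b ^ 2 * Real.log b * Af b| + |Bf b| := abs_add_le _ _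
      _ ≤ 1/2 + 6 := by linarith [Bf_abs b]
      _ ≤ 7 := by norm_num
  have hDlip : |Df b - Df b'| ≤ 11 * Δ := by
    have key : Df b - Df b' =
        (b ^ 2 * Real.log b) * (Af b - Af b') + Af b' * (b ^ 2 * Real.log b - b' ^ 2 * Real.log b')
          + (Bf b - Bf b') := by
      unfold Df; ring
    rw [key]
    have t1 : |(b ^ 2 * Real.log b) * (Af b - Af b')| ≤ (1/4) * (2 * Δ) := by
      rw [abs_mul]
      exact mul_le_mul (psi_bound hb.1 hb.2) (Af_lip b b') (abs_nonneg _) (by norm_num)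
    have t2 : |Af b' * (b ^ 2 * Real.log b - b' ^ 2 * Real.log b')| ≤ 2 * (2 * Δ) := by
      rw [abs_mul]
      exact mul_le_mul (Af_abs b') (psi_lip hb hb') (abs_nonneg _) (by norm_num)
    have t3 := Bf_lip b b'
    calc |(b ^ 2 * Real.log b) * (Af b - Af b') +
            Af b' * (b ^ 2 * Real.log b - b' ^ 2 * Real.log b') + (Bf b - Bf b')|
        ≤ |(b ^ 2 * Real.log b) * (Af b - Af b') +
            Af b' * (b ^ 2 * Real.log b - b' ^ 2 * Real.log b')| + |Bf b - Bf b'| := abs_add_le _ _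
      _ ≤ (|(b ^ 2 * Real.log b) * (Af b - Af b')| +
            |Af b' * (b ^ 2 * Real.log b - b' ^ 2 * Real.log b')|) + |Bf b - Bf b'| := by
          linarith [abs_add_le ((b ^ 2 * Real.log b) * (Af b - Af b'))
            (Af b' * (b ^ 2 * Real.log b - b' ^ 2 * Real.log b'))]
      _ ≤ ((1/4) * (2 * Δ) + 2 * (2 * Δ)) + 6 * Δ := by linarith
      _ ≤ 11 * Δ := by linarith
  -- final quotient estimate
  have hDbne : Df b ≠ 0 := by linarith
  have hDb'ne : Df b' ≠ 0 := by linarith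
  have key : Nf b / Df b - Nf b' / Df b' =
      (Nf b * (Df b' - Df b) + Df b * (Nf b - Nf b')) / (Df b * Df b') := by
    field_simp
    ring
  rw [key, abs_div]
  have hDD : (1:ℝ)/4 ≤ Df b * Df b' := by nlinarith
  have hDDabs : |Df b * Df b'| = Df b * Df b' := abs_of_pos (by nlinarith)
  rw [hDDabs]
  have hnum : |Nf b * (Df b' - Df b) + Df b * (Nf b - Nf b')| ≤ 64 * Δ := by
    have t1 : |Nf b * (Df b' - Df b)| ≤ 2 * (11 * Δ) := by
      rw [abs_mul]
      have : |Df b' - Df b| ≤ 11 * Δ := by rw [abs_sub_comm]; exact hDlip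
      exact mul_le_mul hNabs this (abs_nonneg _) (by norm_num)
    have t2 : |Df b * (Nf b - Nf b')| ≤ 7 * (6 * Δ) := by
      rw [abs_mul]
      exact mul_le_mul hDabs hNlip (abs_nonneg _) (by norm_num)
    calc |Nf b * (Df b' - Df b) + Df b * (Nf b - Nf b')|
        ≤ |Nf b * (Df b' - Df b)| + |Df b * (Nf b - Nf b')| := abs_add_le _ _
      _ ≤ 2 * (11 * Δ) + 7 * (6 * Δ) := by linarith
      _ = 64 * Δ := by ring
  rw [div_le_iff₀ (by nlinarith : (0:ℝ) < Df b * Df b')]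
  nlinarith [hnum, hDD, hΔ0]
end

section
/- Let b ∈ (0,1) and γ_1, γ_2 ∈ [0,1]. Then |F(b,γ_1) − F(b,γ_2)| ≥ 0.04205 · b⁴ · |γ_1 − γ_2|; equivalently, |γ_1 − γ_2| ≤ ((4.8765)² / b⁴) · |F(b,γ_1) − F(b,γ_2)|. Since ‖q_1 − q_2‖_{L^∞} = |γ_1 − γ_2| for the one-step potentials q_i = γ_i χ_{(0,b)}(|x|) and |F(b,γ_1) − F(b,γ_2)| is a lower bound for ‖Λ_{q_1} − Λ_{q_2}‖, this gives Lipschitz stability of the potential-to-DtN map on the family of one-step radial potentials with fixed discontinuity radius b. -/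
/-!
The substitution `t = cos θ` turns the Poisson integral into
`∫₀^π cos (x cos θ) sin θ ^ (2n) dθ`. Since `|cos a - cos c| ≤ |a² - c²| / 2`, the normalized
functions `N = J₀(x)` and `K = J₂(x) / x²` are Lipschitz in `x²` (constants `1/4`, `1/96`);
comparing with `x = 0`, they lie in `[3/4, 1]` and `[11/96, 1/8]` when `x² ≤ 1`.
With `x² = b²γ` one has `F(b,γ) = (N - b⁴γK) / (N + b⁴γK)`, and the difference of two such
quotients is `2b⁴(γ₂K₂N₁ - γ₁K₁N₂)` over a denominator at most `(9/8)²`. Because `N` and `K`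
vary slowly, the cross term is dominated by `(γ₂ - γ₁)K₂N₁`, which gives
`|F(b,γ₁) - F(b,γ₂)| ≥ b⁴|γ₁ - γ₂| / 20`; both claims follow as `1/20 > 0.04205 > 4.8765⁻²`.
-/

open Real Set

/-- `F(b,γ)`, the first eigenvalue `c₁(b,γ)` of the Dirichlet-to-Neumann map for the
one-step radial potential `q = γ χ_{(0,b)}(|x|)` on the unit disk. -/
noncomputable def dtnF (b γ : ℝ) : ℝ :=
  (besselJ 0 (b * Real.sqrt γ) - b ^ 2 * besselJ 2 (b * Real.sqrt γ)) /
    (besselJ 0 (b * Real.sqrt γ) + b ^ 2 * besselJ 2 (b * Real.sqrt γ))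

open MeasureTheory

theorem integral_neg_one_one_eq_integral_sin_smul_comp_cos {E : Type*} [NormedAddCommGroup E]
    [NormedSpace ℝ E] (g : ℝ → E) :
    ∫ t in (-1 : ℝ)..1, g t = ∫ θ in 0..π, sin θ • g (cos θ) := by
  have hcos : ∀ θ ∈ Icc 0 π, HasDerivWithinAt cos (-sin θ) (Icc 0 π) θ :=
    fun θ _ => (hasDerivAt_cos θ).hasDerivWithinAt
  rw [intervalIntegral.integral_of_le (by norm_num), intervalIntegral.integral_of_le pi_pos.le,
    ← integral_Icc_eq_integral_Ioc, ← integral_Icc_eq_integral_Ioc, ← bijOn_cos.image_eq,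
    integral_image_eq_integral_abs_deriv_smul measurableSet_Icc hcos injOn_cos]
  refine setIntegral_congr_fun measurableSet_Icc fun θ hθ => ?_
  rw [abs_neg, abs_of_nonneg (sin_nonneg_of_nonneg_of_le_pi hθ.1 hθ.2)]

noncomputable def poissonIntegral (n : ℕ) (r : ℝ) : ℝ :=
  ∫ θ in 0..π, cos (r * cos θ) * sin θ ^ (2 * n)

noncomputable def besselJDivPow (n : ℕ) (r : ℝ) : ℝ :=
  poissonIntegral n r / (2 ^ n * Gamma ((n : ℝ) + 1 / 2) * √π)

theorem besselJ_eq_pow_mul_besselJDivPow (n : ℕ) (r : ℝ) :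
    besselJ n r = r ^ n * besselJDivPow n r := by
  have hint : ∫ t in (-1 : ℝ)..1, cos (r * t) * (1 - t ^ 2) ^ ((n : ℝ) - 1 / 2) =
      poissonIntegral n r := by
    rw [integral_neg_one_one_eq_integral_sin_smul_comp_cos, poissonIntegral,
      intervalIntegral.integral_of_le pi_pos.le, intervalIntegral.integral_of_le pi_pos.le,
      integral_Ioc_eq_integral_Ioo, integral_Ioc_eq_integral_Ioo]
    refine setIntegral_congr_fun measurableSet_Ioo fun θ hθ => ?_
    have hsin : 0 < sin θ := sin_pos_of_pos_of_lt_pi hθ.1 hθ.2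
    have : sin θ * (sin θ ^ 2) ^ ((n : ℝ) - 1 / 2) = sin θ ^ (2 * n) := by
      rw [← rpow_natCast _ 2, ← rpow_mul hsin.le, ← rpow_natCast _ (2 * n)]
      nth_rw 1 [← rpow_one (sin θ)]
      rw [← rpow_add hsin]
      push_cast
      ring_nf
    rw [smul_eq_mul, ← sin_sq, ← this]
    ring
  rw [besselJ, besselJDivPow, hint]
  ring

theorem abs_cos_sub_cos_le_half_abs_sq_sub_sq (a c : ℝ) :
    |cos a - cos c| ≤ |a ^ 2 - c ^ 2| / 2 := by
  have hprod : |a ^ 2 - c ^ 2| / 2 = 2 * (|(a + c) / 2| * |(a - c) / 2|) := by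
    rw [← abs_mul, show a ^ 2 - c ^ 2 = 4 * ((a + c) / 2 * ((a - c) / 2)) by ring, abs_mul]
    norm_num; ring
  rw [cos_sub_cos, hprod, abs_mul, abs_mul, mul_assoc]
  norm_num
  exact mul_le_mul abs_sin_le_abs abs_sin_le_abs (abs_nonneg _) (abs_nonneg _)

theorem poissonIntegral_le (n : ℕ) (r : ℝ) : poissonIntegral n r ≤ poissonIntegral n 0 := by
  refine intervalIntegral.integral_mono_on pi_pos.le
    (by apply Continuous.intervalIntegrable; fun_prop)
    (by apply Continuous.intervalIntegrable; fun_prop) fun θ _ => ?_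
  rw [zero_mul, cos_zero, one_mul]
  exact mul_le_of_le_one_left ((even_two_mul n).pow_nonneg _) (cos_le_one _)

theorem abs_poissonIntegral_sub_le (n : ℕ) (r s : ℝ) :
    |poissonIntegral n r - poissonIntegral n s| ≤
      |r ^ 2 - s ^ 2| / 2 * ∫ θ in 0..π, cos θ ^ 2 * sin θ ^ (2 * n) := by
  rw [poissonIntegral, poissonIntegral,
    ← intervalIntegral.integral_sub (by apply Continuous.intervalIntegrable; fun_prop)
      (by apply Continuous.intervalIntegrable; fun_prop),
    ← intervalIntegral.integral_const_mul, ← Real.norm_eq_abs]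
  refine intervalIntegral.norm_integral_le_of_norm_le pi_pos.le (.of_forall fun θ _ => ?_)
    (Continuous.intervalIntegrable (by fun_prop) _ _)
  have hcos := abs_cos_sub_cos_le_half_abs_sq_sub_sq (r * cos θ) (s * cos θ)
  rw [show (r * cos θ) ^ 2 - (s * cos θ) ^ 2 = (r ^ 2 - s ^ 2) * cos θ ^ 2 by ring, abs_mul,
    abs_sq] at hcos
  have hsin : 0 ≤ sin θ ^ (2 * n) := (even_two_mul n).pow_nonneg _
  rw [Real.norm_eq_abs, ← sub_mul, abs_mul, abs_of_nonneg hsin]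
  calc |cos (r * cos θ) - cos (s * cos θ)| * sin θ ^ (2 * n)
      ≤ |r ^ 2 - s ^ 2| * cos θ ^ 2 / 2 * sin θ ^ (2 * n) := by gcongr
    _ = _ := by ring

theorem integral_sin_pow_four : ∫ θ in 0..π, sin θ ^ 4 = 3 * π / 8 := by
  have := integral_sin_pow_even (n := 2)
  norm_num [Finset.prod_range_succ] at this
  rw [this]; ring

theorem integral_cos_sq_mul_sin_pow_four : ∫ θ in 0..π, cos θ ^ 2 * sin θ ^ 4 = π / 16 := by
  have h6 := integral_sin_pow_even (n := 3)
  norm_num [Finset.prod_range_succ] at h6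
  have : ∫ θ in 0..π, cos θ ^ 2 * sin θ ^ 4 = ∫ θ in 0..π, (sin θ ^ 4 - sin θ ^ 6) := by
    congr 1; ext θ; rw [cos_sq']; ring
  rw [this, intervalIntegral.integral_sub (by apply Continuous.intervalIntegrable; fun_prop)
    (by apply Continuous.intervalIntegrable; fun_prop), integral_sin_pow_four, h6]
  ring

theorem besselJDivPow_zero_eq (r : ℝ) : besselJDivPow 0 r = poissonIntegral 0 r / π := by
  rw [besselJDivPow, Nat.cast_zero, zero_add, Gamma_one_half_eq, pow_zero, one_mul,
    mul_self_sqrt pi_nonneg]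

theorem besselJDivPow_two_eq (r : ℝ) : besselJDivPow 2 r = poissonIntegral 2 r / (3 * π) := by
  have hGamma : Gamma ((2 : ℕ) + 1 / 2) = 3 / 4 * √π := by
    rw [show ((2 : ℕ) : ℝ) + 1 / 2 = 1 / 2 + 1 + 1 by norm_num, Gamma_add_one (by norm_num),
      Gamma_add_one (by norm_num), Gamma_one_half_eq]
    ring
  rw [besselJDivPow, hGamma, mul_assoc, mul_assoc, mul_self_sqrt pi_nonneg]
  ring

theorem poissonIntegral_zero_zero : poissonIntegral 0 0 = π := by
  simp [poissonIntegral]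

theorem poissonIntegral_two_zero : poissonIntegral 2 0 = 3 * π / 8 := by
  simpa [poissonIntegral] using integral_sin_pow_four

theorem abs_besselJDivPow_zero_sub_le (r s : ℝ) :
    |besselJDivPow 0 r - besselJDivPow 0 s| ≤ |r ^ 2 - s ^ 2| / 4 := by
  have h := abs_poissonIntegral_sub_le 0 r s
  simp only [mul_zero, pow_zero, mul_one, integral_cos_sq, cos_pi, sin_pi, cos_zero, sin_zero] at h
  rw [besselJDivPow_zero_eq, besselJDivPow_zero_eq, ← sub_div, abs_div, abs_of_pos pi_pos,
    div_le_iff₀ pi_pos]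
  linarith

theorem abs_besselJDivPow_two_sub_le (r s : ℝ) :
    |besselJDivPow 2 r - besselJDivPow 2 s| ≤ |r ^ 2 - s ^ 2| / 96 := by
  have h := abs_poissonIntegral_sub_le 2 r s
  rw [integral_cos_sq_mul_sin_pow_four] at h
  rw [besselJDivPow_two_eq, besselJDivPow_two_eq, ← sub_div, abs_div,
    abs_of_pos (by positivity : (0 : ℝ) < 3 * π), div_le_iff₀ (by positivity)]
  linarith

theorem besselJDivPow_zero_mem_Icc {x : ℝ} (hx : x ^ 2 ≤ 1) :
    besselJDivPow 0 x ∈ Icc (3 / 4) 1 := by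
  have hle : besselJDivPow 0 x ≤ 1 := by
    rw [besselJDivPow_zero_eq, div_le_one pi_pos, ← poissonIntegral_zero_zero]
    exact poissonIntegral_le 0 x
  have hsub := abs_besselJDivPow_zero_sub_le x 0
  rw [besselJDivPow_zero_eq 0, poissonIntegral_zero_zero, div_self pi_ne_zero,
    zero_pow two_ne_zero, sub_zero, abs_of_nonneg (sq_nonneg x)] at hsub
  constructor <;> linarith [abs_le.1 hsub]

theorem besselJDivPow_two_mem_Icc {x : ℝ} (hx : x ^ 2 ≤ 1) :
    besselJDivPow 2 x ∈ Icc (11 / 96) (1 / 8) := by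
  have hzero : besselJDivPow 2 0 = 1 / 8 := by
    rw [besselJDivPow_two_eq, poissonIntegral_two_zero]
    field_simp
  have hle : besselJDivPow 2 x ≤ 1 / 8 := by
    rw [← hzero, besselJDivPow_two_eq, besselJDivPow_two_eq]
    gcongr
    exact poissonIntegral_le 2 x
  have hsub := abs_besselJDivPow_two_sub_le x 0
  rw [hzero, zero_pow two_ne_zero, sub_zero, abs_of_nonneg (sq_nonneg x)] at hsub
  constructor <;> linarith [abs_le.1 hsub]

theorem dtnF_eq {b γ : ℝ} (hγ : 0 ≤ γ) :
    dtnF b γ =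
      (besselJDivPow 0 (b * √γ) - b ^ 4 * γ * besselJDivPow 2 (b * √γ)) /
        (besselJDivPow 0 (b * √γ) + b ^ 4 * γ * besselJDivPow 2 (b * √γ)) := by
  have hsq : (b * √γ) ^ 2 = b ^ 2 * γ := by rw [mul_pow, sq_sqrt hγ]
  rw [dtnF, besselJ_eq_pow_mul_besselJDivPow, besselJ_eq_pow_mul_besselJDivPow, hsq, pow_zero,
    one_mul]
  ring_nf

theorem sub_div_add_sub_sub_div_add_ge {β γ₁ γ₂ N₁ N₂ K₁ K₂ : ℝ} (hβ₀ : 0 ≤ β) (hβ₁ : β ≤ 1)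
    (hγ₁ : 0 ≤ γ₁) (hγ : γ₁ ≤ γ₂) (hγ₂ : γ₂ ≤ 1)
    (hN₁ : N₁ ∈ Icc (3 / 4 : ℝ) 1) (hN₂ : N₂ ∈ Icc (3 / 4 : ℝ) 1)
    (hK₁ : K₁ ∈ Icc (11 / 96 : ℝ) (1 / 8)) (hK₂ : K₂ ∈ Icc (11 / 96 : ℝ) (1 / 8))
    (hN : |N₁ - N₂| ≤ (γ₂ - γ₁) / 4) (hK : |K₁ - K₂| ≤ (γ₂ - γ₁) / 96) :
    β * (γ₂ - γ₁) / 20 ≤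
      (N₁ - β * γ₁ * K₁) / (N₁ + β * γ₁ * K₁) - (N₂ - β * γ₂ * K₂) / (N₂ + β * γ₂ * K₂) := by
  obtain ⟨hN₁l, hN₁u⟩ := hN₁
  obtain ⟨hN₂l, hN₂u⟩ := hN₂
  obtain ⟨hK₁l, hK₁u⟩ := hK₁
  obtain ⟨hK₂l, hK₂u⟩ := hK₂
  obtain ⟨hNl, -⟩ := abs_le.1 hN
  obtain ⟨-, hKu⟩ := abs_le.1 hK
  have hΔ : 0 ≤ γ₂ - γ₁ := sub_nonneg.2 hγ
  have hcross : 17 / 384 * (γ₂ - γ₁) ≤ γ₂ * K₂ * N₁ - γ₁ * K₁ * N₂ := by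
    have hmain : 33 / 384 * (γ₂ - γ₁) ≤ (γ₂ - γ₁) * K₂ * N₁ := by
      nlinarith [mul_le_mul hK₂l hN₁l (by norm_num) (by linarith)]
    have hdrift : -((γ₂ - γ₁) / 24) ≤ K₂ * (N₁ - N₂) + N₂ * (K₂ - K₁) := by
      nlinarith [mul_nonneg (by linarith : 0 ≤ K₂) (by linarith : 0 ≤ N₁ - N₂ + (γ₂ - γ₁) / 4),
        mul_nonneg (by linarith : 0 ≤ N₂) (by linarith : 0 ≤ K₂ - K₁ + (γ₂ - γ₁) / 96),
        mul_nonneg (by linarith : 0 ≤ 1 / 8 - K₂) hΔ, mul_nonneg (by linarith : 0 ≤ 1 - N₂) hΔ]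
    have hγdrift : -((γ₂ - γ₁) / 24) ≤ γ₁ * (K₂ * (N₁ - N₂) + N₂ * (K₂ - K₁)) := by
      nlinarith [mul_le_mul_of_nonneg_left hdrift hγ₁, mul_nonneg (by linarith : 0 ≤ 1 - γ₁) hΔ]
    linarith [show γ₂ * K₂ * N₁ - γ₁ * K₁ * N₂ =
        (γ₂ - γ₁) * K₂ * N₁ + γ₁ * (K₂ * (N₁ - N₂) + N₂ * (K₂ - K₁)) by ring]
  have hden : ∀ {γ N K : ℝ}, 0 ≤ γ → γ ≤ 1 → N ∈ Icc (3 / 4 : ℝ) 1 →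
      K ∈ Icc (11 / 96 : ℝ) (1 / 8) → 0 < N + β * γ * K ∧ N + β * γ * K ≤ 9 / 8 := by
    intro γ N K hγ hγ' hN hK
    have hβγ : β * γ ≤ 1 := mul_le_one₀ hβ₁ hγ hγ'
    constructor <;> nlinarith [mul_le_mul hβγ hK.2 (by linarith [hK.1]) zero_le_one, hN.1, hN.2,
      mul_nonneg (mul_nonneg hβ₀ hγ) (by linarith [hK.1] : 0 ≤ K)]
  obtain ⟨hD₁, hD₁'⟩ := hden hγ₁ (hγ.trans hγ₂) ⟨hN₁l, hN₁u⟩ ⟨hK₁l, hK₁u⟩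
  obtain ⟨hD₂, hD₂'⟩ := hden (hγ₁.trans hγ) hγ₂ ⟨hN₂l, hN₂u⟩ ⟨hK₂l, hK₂u⟩
  rw [div_sub_div _ _ hD₁.ne' hD₂.ne', le_div_iff₀ (mul_pos hD₁ hD₂)]
  calc β * (γ₂ - γ₁) / 20 * ((N₁ + β * γ₁ * K₁) * (N₂ + β * γ₂ * K₂))
      ≤ β * (γ₂ - γ₁) / 20 * (9 / 8 * (9 / 8)) := by gcongr
    _ ≤ 2 * β * (17 / 384 * (γ₂ - γ₁)) := by nlinarith [mul_nonneg hβ₀ hΔ]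
    _ ≤ 2 * β * (γ₂ * K₂ * N₁ - γ₁ * K₁ * N₂) := by gcongr
    _ = _ := by ring

theorem abs_dtnF_sub_ge {b γ₁ γ₂ : ℝ} (hb : b ^ 2 ≤ 1) (hγ₁ : γ₁ ∈ Icc (0 : ℝ) 1)
    (hγ₂ : γ₂ ∈ Icc (0 : ℝ) 1) :
    b ^ 4 * |γ₁ - γ₂| / 20 ≤ |dtnF b γ₁ - dtnF b γ₂| := by
  wlog h : γ₁ ≤ γ₂ generalizing γ₁ γ₂
  · rw [abs_sub_comm, abs_sub_comm (dtnF b γ₁)]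
    exact this hγ₂ hγ₁ (le_of_not_ge h)
  have hsq : ∀ {γ : ℝ}, γ ∈ Icc (0 : ℝ) 1 → (b * √γ) ^ 2 = b ^ 2 * γ ∧ b ^ 2 * γ ≤ 1 := by
    intro γ hγ
    exact ⟨by rw [mul_pow, sq_sqrt hγ.1], mul_le_one₀ hb hγ.1 hγ.2⟩
  obtain ⟨hx₁, hx₁'⟩ := hsq hγ₁
  obtain ⟨hx₂, hx₂'⟩ := hsq hγ₂
  have hdist : |(b * √γ₁) ^ 2 - (b * √γ₂) ^ 2| ≤ γ₂ - γ₁ := by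
    rw [hx₁, hx₂, ← mul_sub, abs_mul, abs_sq, abs_sub_comm, abs_of_nonneg (sub_nonneg.2 h)]
    exact mul_le_of_le_one_left (sub_nonneg.2 h) hb
  rw [abs_sub_comm γ₁, abs_of_nonneg (sub_nonneg.2 h), dtnF_eq hγ₁.1, dtnF_eq hγ₂.1]
  refine le_trans ?_ (le_abs_self _)
  refine sub_div_add_sub_sub_div_add_ge (by positivity) (by nlinarith) hγ₁.1 h hγ₂.2
    (besselJDivPow_zero_mem_Icc (hx₁ ▸ hx₁')) (besselJDivPow_zero_mem_Icc (hx₂ ▸ hx₂'))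
    (besselJDivPow_two_mem_Icc (hx₁ ▸ hx₁')) (besselJDivPow_two_mem_Icc (hx₂ ▸ hx₂')) ?_ ?_
  · linarith [abs_besselJDivPow_zero_sub_le (b * √γ₁) (b * √γ₂)]
  · linarith [abs_besselJDivPow_two_sub_le (b * √γ₁) (b * √γ₂)]

theorem lipschitz_stability_fixed_radius (b γ₁ γ₂ : ℝ) (hb : b ∈ Set.Ioo (0 : ℝ) 1)
    (hγ₁ : γ₁ ∈ Set.Icc (0 : ℝ) 1) (hγ₂ : γ₂ ∈ Set.Icc (0 : ℝ) 1) :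
    0.04205 * b ^ 4 * |γ₁ - γ₂| ≤ |dtnF b γ₁ - dtnF b γ₂| ∧
      |γ₁ - γ₂| ≤ (4.8765) ^ 2 / b ^ 4 * |dtnF b γ₁ - dtnF b γ₂| := by
  have hb4 : 0 < b ^ 4 := pow_pos hb.1 4
  have hstab := abs_dtnF_sub_ge (by nlinarith [hb.1, hb.2]) hγ₁ hγ₂
  have hγ := abs_nonneg (γ₁ - γ₂)
  constructor
  · nlinarith [mul_nonneg hb4.le hγ]
  · rw [div_mul_eq_mul_div, le_div_iff₀ hb4]
    nlinarith [mul_nonneg hb4.le hγ]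
end
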